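/- arXiv:math/0507138 — 6 statements merged into one kernel-verified Lean document; each statement's English description precedes it below -/
import Mathlib

section
/- Let G be a finite cyclic group generated by a of prime order p, R a domain with field of fractions F, and M an RG-module free of finite R-rank affording a representation Γ. If the matrix Γ(a) does not have 1 as an eigenvalue (equivalently, a - 1 acts invertibly on F ⊗_R M), then H¹(G, (F⊗_R M)/M) is trivial. -/
/-- The group of 1-cocycles `f : G → W ⧸ N`, where the `G`-action on the quotient
is induced (via representatives) by additive maps `act g : W →+ W` preserving `N`. -/
def oneCocycles {G W : Type*} [Group G] [AddCommGroup W] (act : G → W →+ W)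
    (N : AddSubgroup W) (hN : ∀ g : G, ∀ w ∈ N, act g w ∈ N) :
    AddSubgroup (G → W ⧸ N) where
  carrier := {f | ∀ x y : G, ∀ v : W, (QuotientAddGroup.mk v : W ⧸ N) = f y →
      f (x * y) = QuotientAddGroup.mk (act x v) + f x}
  zero_mem' := by
    intro x y v hv
    have hv0 : (QuotientAddGroup.mk v : W ⧸ N) = 0 := by simpa using hv
    have hvN : v ∈ N := (QuotientAddGroup.eq_zero_iff v).mp hv0
    have h : (QuotientAddGroup.mk (act x v) : W ⧸ N) = 0 :=
      (QuotientAddGroup.eq_zero_iff _).mpr (hN x v hvN)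
    show (0 : W ⧸ N) = _ + (0 : W ⧸ N)
    rw [h, add_zero]
  add_mem' := by
    intro f g hf hg x y v hv
    obtain ⟨v₁, hv₁⟩ := QuotientAddGroup.mk_surjective (f y)
    have hv₂ : (QuotientAddGroup.mk (v - v₁) : W ⧸ N) = g y := by
      rw [QuotientAddGroup.mk_sub, hv₁, hv]
      show (f y + g y) - f y = g y
      abel
    have h1 := hf x y v₁ hv₁
    have h2 := hg x y (v - v₁) hv₂
    show f (x * y) + g (x * y) = _ + (f x + g x)
    rw [h1, h2]
    have : act x v = act x v₁ + act x (v - v₁) := by rw [← map_add]; congr 1; abel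
    rw [this, QuotientAddGroup.mk_add]
    abel
  neg_mem' := by
    intro f hf x y v hv
    have hv' : (QuotientAddGroup.mk (-v) : W ⧸ N) = f y := by
      rw [QuotientAddGroup.mk_neg, hv]
      show -(-(f y)) = f y
      abel
    have h1 := hf x y (-v) hv'
    show -(f (x * y)) = _ + -(f x)
    rw [h1, map_neg, QuotientAddGroup.mk_neg]
    abel

/-- The group of 1-coboundaries `g ↦ (g-1)•w + N`. -/
def oneCoboundaries {G W : Type*} [Group G] [AddCommGroup W] (act : G → W →+ W)
    (N : AddSubgroup W) : AddSubgroup (G → W ⧸ N) where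
  carrier := {f | ∃ w : W, ∀ g : G, f g = QuotientAddGroup.mk (act g w - w)}
  zero_mem' := ⟨0, by simp⟩
  add_mem' := by
    rintro f g ⟨w₁, h₁⟩ ⟨w₂, h₂⟩
    refine ⟨w₁ + w₂, fun x => ?_⟩
    show f x + g x = _
    rw [h₁, h₂, ← QuotientAddGroup.mk_add]
    congr 1
    rw [map_add]
    abel
  neg_mem' := by
    rintro f ⟨w, h⟩
    refine ⟨-w, fun x => ?_⟩
    show -(f x) = _
    rw [h, ← QuotientAddGroup.mk_neg]
    congr 1
    rw [map_neg]
    abel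

/-- First cohomology `H¹(G, W ⧸ N)` as cocycles modulo coboundaries. -/
def H1 {G W : Type*} [Group G] [AddCommGroup W] (act : G → W →+ W)
    (N : AddSubgroup W) (hN : ∀ g : G, ∀ w ∈ N, act g w ∈ N) : Type _ :=
  oneCocycles act N hN ⧸ ((oneCoboundaries act N).addSubgroupOf (oneCocycles act N hN))

noncomputable instance {G W : Type*} [Group G] [AddCommGroup W] (act : G → W →+ W)
    (N : AddSubgroup W) (hN : ∀ g : G, ∀ w ∈ N, act g w ∈ N) :
    AddCommGroup (H1 act N hN) :=
  QuotientAddGroup.Quotient.addCommGroup _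

/-!
The elements at which a 1-cocycle vanishes form a subgroup, so a cocycle on a group generated
by `a` is determined by its value at `a`. If `v ↦ a • v - v` is onto `V`, that value lifts to
some `(a - 1) • w`, so the cocycle agrees with the coboundary of `w` at `a`, hence everywhere.
-/

theorem subsingleton_H1_of_oneCocycles_le {G W : Type*} [Group G] [AddCommGroup W]
    {act : G → W →+ W} {N : AddSubgroup W} {hN : ∀ g : G, ∀ w ∈ N, act g w ∈ N}
    (h : oneCocycles act N hN ≤ oneCoboundaries act N) : Subsingleton (H1 act N hN) := by
  have htop : (oneCoboundaries act N).addSubgroupOf (oneCocycles act N hN) = ⊤ :=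
    AddSubgroup.addSubgroupOf_eq_top.mpr h
  unfold H1
  rw [htop]
  exact QuotientAddGroup.subsingleton_quotient_top

section SMul

variable {G W : Type*} [Group G] [AddCommGroup W] [DistribMulAction G W] {N : AddSubgroup W}
  {hN : ∀ g : G, ∀ w ∈ N, g • w ∈ N}

theorem oneCoboundaries_le_oneCocycles :
    oneCoboundaries (fun g : G => DistribMulAction.toAddMonoidHom W g) N ≤
      oneCocycles (fun g : G => DistribMulAction.toAddMonoidHom W g) N hN := by
  rintro f ⟨w, hf⟩ x y v hv
  replace hf : ∀ g : G, f g = QuotientAddGroup.mk (g • w - w) := hf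
  have hvN : v - (y • w - w) ∈ N := (QuotientAddGroup.eq_iff_sub_mem).mp (hv.trans (hf y))
  have hxv : (QuotientAddGroup.mk (x • v) : W ⧸ N) = QuotientAddGroup.mk (x • (y • w - w)) :=
    QuotientAddGroup.eq_iff_sub_mem.mpr (by simpa only [smul_sub] using hN x _ hvN)
  show f (x * y) = QuotientAddGroup.mk (x • v) + f x
  rw [hf, hf, hxv, ← QuotientAddGroup.mk_add, smul_sub, mul_smul]
  congr 1
  abel

theorem map_one_eq_zero_of_mem_oneCocycles {f : G → W ⧸ N}
    (hf : f ∈ oneCocycles (fun g : G => DistribMulAction.toAddMonoidHom W g) N hN) : f 1 = 0 := by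
  obtain ⟨v, hv⟩ := QuotientAddGroup.mk_surjective (f 1)
  have h : f (1 * 1) = QuotientAddGroup.mk ((1 : G) • v) + f 1 := hf 1 1 v hv
  rwa [one_mul, one_smul, hv, right_eq_add] at h

theorem eq_zero_of_mem_oneCocycles_of_closure_eq_top {S : Set G}
    (hS : Subgroup.closure S = ⊤) {f : G → W ⧸ N}
    (hf : f ∈ oneCocycles (fun g : G => DistribMulAction.toAddMonoidHom W g) N hN)
    (hfS : ∀ s ∈ S, f s = 0) : f = 0 := by
  have hmul : ∀ {x y : G}, f y = 0 → f (x * y) = f x := fun {x y} hy => by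
    have h : f (x * y) = QuotientAddGroup.mk (x • (0 : W)) + f x := hf x y 0 hy.symm
    rwa [smul_zero, QuotientAddGroup.mk_zero, zero_add] at h
  let K : Subgroup G :=
    { carrier := {g | f g = 0}
      one_mem' := map_one_eq_zero_of_mem_oneCocycles hf
      mul_mem' := fun {x y} hx hy => (hmul hy).trans hx
      inv_mem' := fun {x} hx => by
        have h : f (x⁻¹ * x) = f x⁻¹ := hmul hx
        rwa [inv_mul_cancel, map_one_eq_zero_of_mem_oneCocycles hf, eq_comm] at h }
  have hK : Subgroup.closure S ≤ K := (Subgroup.closure_le K).mpr hfS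
  rw [hS] at hK
  exact funext fun g => hK (Subgroup.mem_top g)

theorem subsingleton_H1_of_zpowers_eq_top {a : G} (ha : Subgroup.zpowers a = ⊤)
    (hsurj : Function.Surjective fun v : W => a • v - v) :
    Subsingleton
      (H1 (fun g : G => DistribMulAction.toAddMonoidHom W g) N hN) := by
  refine subsingleton_H1_of_oneCocycles_le fun f hf => ?_
  obtain ⟨v, hv⟩ := QuotientAddGroup.mk_surjective (f a)
  obtain ⟨w, rfl⟩ := hsurj v
  let δw : G → W ⧸ N := fun g => QuotientAddGroup.mk (g • w - w)
  have hδw : δw ∈ oneCoboundaries (fun g : G => DistribMulAction.toAddMonoidHom W g) N :=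
    ⟨w, fun _ => rfl⟩
  have hdiff : f - δw = 0 := by
    refine eq_zero_of_mem_oneCocycles_of_closure_eq_top
      ((Subgroup.zpowers_eq_closure a).symm.trans ha)
      (sub_mem hf (oneCoboundaries_le_oneCocycles hδw)) ?_
    rintro s rfl
    exact sub_eq_zero.mpr hv.symm
  rwa [sub_eq_zero.mp hdiff]

end SMul

theorem zpowers_ofAdd_one_eq_top (n : ℕ) :
    Subgroup.zpowers (Multiplicative.ofAdd (1 : ZMod n)) = ⊤ :=
  eq_top_iff.mpr fun g _ => ⟨ZMod.cast (Multiplicative.toAdd g), by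
    show Multiplicative.ofAdd 1 ^ _ = g
    rw [← ofAdd_zsmul, zsmul_one, ZMod.intCast_zmod_cast]
    rfl⟩

theorem stmt_3_general (p : ℕ) (R : Type*) [CommRing R]
    (V : Type*) [AddCommGroup V]
    [Module R V]
    [DistribMulAction (Multiplicative (ZMod p)) V]
    (M : Submodule R V)
    (hM : ∀ (g : Multiplicative (ZMod p)), ∀ v ∈ M, g • v ∈ M)
    (hinv : Function.Bijective
      (fun v : V => (Multiplicative.ofAdd (1 : ZMod p)) • v - v)) :
    Subsingleton
      (H1 (fun g : Multiplicative (ZMod p) => DistribMulAction.toAddMonoidHom V g)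
        M.toAddSubgroup (fun g w hw => hM g w hw)) :=
  subsingleton_H1_of_zpowers_eq_top (zpowers_ofAdd_one_eq_top p) hinv.surjective

/-- Let `G = ⟨a | a^p = 1⟩` with `p` prime, `R` a domain with
fraction field `F`, `M ⊆ V = F ⊗ M` an `RG`-lattice. If `a - 1` acts invertibly
on `V` (i.e. `Γ(a)` does not have eigenvalue `1`), then `H¹(G, V/M)` is trivial. -/
theorem stmt_3 (p : ℕ) (hp : p.Prime) (R : Type*) [CommRing R] [IsDomain R]
    (V : Type*) [AddCommGroup V]
    [Module (FractionRing R) V] [Module R V] [IsScalarTower R (FractionRing R) V]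
    [DistribMulAction (Multiplicative (ZMod p)) V]
    [SMulCommClass (Multiplicative (ZMod p)) (FractionRing R) V]
    (M : Submodule R V)
    (hM : ∀ (g : Multiplicative (ZMod p)), ∀ v ∈ M, g • v ∈ M)
    (hspan : Submodule.span (FractionRing R) (M : Set V) = ⊤)
    [Module.Free R M] [Module.Finite R M]
    (hinv : Function.Bijective
      (fun v : V => (Multiplicative.ofAdd (1 : ZMod p)) • v - v)) :
    Subsingleton
      (H1 (fun g : Multiplicative (ZMod p) => DistribMulAction.toAddMonoidHom V g)
        M.toAddSubgroup (fun g w hw => hM g w hw)) :=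
  stmt_3_general p R V M hM hinv
end

section
/- Let p be a prime, R the ring of integers of a finite ramified extension of ℚ_p, with prime element t and ramification index d > 1, so p = t^d θ with θ a unit in R. Let G = ⟨a | a^p = 1⟩ and for 1 ≤ j < d, 1 ≤ i < p set X_{ji} = t^j·RG + (a-1)^i·RG ⊆ RG. Then X_{ji} is an indecomposable RG-module. -/
/-!
An endomorphism `f` of the ideal `X` of the commutative ring `RG` satisfies `x * f y = y * f x`,
so it is determined by its value `u` at the non-zero-divisor `τ = t ^ j ∈ X`; for the projection
onto a direct summand, `u * u = τ * u`. Over the fraction field `K` of `R`, `u / τ` is an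
idempotent of `KG`, and the trace of multiplication by it is both the rank `r ≤ p` of its image
and `p` times its coefficient at `1`. Hence `t ^ j * r = p * u 1 = t ^ d * θ * u 1`, so `t ∣ r`
because `j < d`. As `t` also divides `p` and is not a unit, `r` is not prime to `p`, so
`r ∈ {0, p}`, which forces `u = 0` or `u = τ`.
-/

open LinearMap Module nonZeroDivisors

theorem Ideal.coe_mul_map_comm {A : Type*} [CommRing A] {X : Ideal A} (f : X →ₗ[A] X)
    (x y : X) : (x : A) * f y = y * f x := by
  have hxy : (x : A) • y = (y : A) • x := Subtype.ext (mul_comm (x : A) y)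
  calc (x : A) * f y = ↑(f ((x : A) • y)) := by rw [map_smul]; rfl
    _ = (y : A) * f x := by rw [hxy, map_smul]; rfl

theorem Ideal.eq_bot_or_eq_bot_of_isCompl {A : Type*} [CommRing A] {X : Ideal A} {τ : A}
    (hτX : τ ∈ X) (hτ : τ ∈ A⁰) (h : ∀ u : A, u * u = τ * u → u = 0 ∨ u = τ)
    {N₁ N₂ : Submodule A X} (hN : IsCompl N₁ N₂) : N₁ = ⊥ ∨ N₂ = ⊥ := by
  set e := N₁.projection N₂ hN
  set τ' : X := ⟨τ, hτX⟩
  have hcomm (x : X) : τ * e x = x * e τ' := Ideal.coe_mul_map_comm e τ' x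
  have hcancel (x : X) (hx : (x : A) * τ = 0) : x = 0 :=
    Subtype.ext ((mul_right_mem_nonZeroDivisors_eq_zero_iff hτ).1 hx)
  have hu : (e τ' : A) * e τ' = τ * e τ' := by
    rw [← hcomm, Submodule.projection_apply_of_mem_left hN (Submodule.projection_apply_mem hN _)]
  rcases h _ hu with hu0 | huτ
  · refine .inl (Submodule.eq_bot_iff _ |>.2 fun x hx => hcancel x ?_)
    rw [mul_comm, ← Submodule.projection_apply_of_mem_left hN hx, hcomm, hu0, mul_zero]
  · refine .inr (Submodule.eq_bot_iff _ |>.2 fun x hx => hcancel x ?_)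
    rw [← huτ, ← hcomm, Submodule.projection_apply_of_mem_right hN hx, ZeroMemClass.coe_zero,
      mul_zero]

theorem dvd_of_pow_mul_eq_pow_mul {M : Type*} [CommMonoidWithZero M] [IsCancelMulZero M]
    {t a b : M} (ht : t ≠ 0) {j d : ℕ} (hjd : j < d) (h : t ^ j * a = t ^ d * b) : t ∣ a := by
  obtain ⟨k, rfl⟩ := Nat.exists_eq_add_of_lt hjd
  rw [add_assoc, pow_add, pow_succ', mul_assoc] at h
  exact ⟨t ^ k * b, by rw [mul_left_cancel₀ (pow_ne_zero j ht) h, mul_assoc]⟩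

theorem Irreducible.not_dvd_natCast_of_coprime {R : Type*} [CommRing R] {t : R}
    (ht : Irreducible t) {m n : ℕ} (hmn : m.Coprime n) (hm : t ∣ (m : R)) : ¬t ∣ (n : R) :=
  fun hn => ht.not_isUnit <|
    (hmn.isCoprime.map (Int.castRingHom R)).isUnit_of_dvd' (by simpa using hm) (by simpa using hn)

namespace MonoidAlgebra

theorem algebraMap_mem_nonZeroDivisors {R G : Type*} [CommRing R] [IsDomain R] [CommMonoid G]
    {r : R} (hr : r ≠ 0) : algebraMap R R[G] r ∈ R[G]⁰ := by
  refine mem_nonZeroDivisors_iff_right.2 fun x hx => ?_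
  rw [← Algebra.commutes, ← Algebra.smul_def, smul_eq_zero] at hx
  exact hx.resolve_left hr

variable {R G : Type*} [CommRing R] [Group G] [Fintype G]

theorem trace_mulLeft (w : R[G]) :
    trace R R[G] (mulLeft R w) = Fintype.card G * w.coeff 1 := by
  classical
  have hdiag (g : G) : toMatrix (basis G R) (basis G R) (mulLeft R w) g g = w.coeff 1 := by
    rw [toMatrix_apply, basis_apply, mulLeft_apply]
    exact (coeff_mul_single_apply ..).trans (by simp)
  rw [trace_eq_matrix_trace R (basis G R), Matrix.trace]
  simp only [Matrix.diag, hdiag, Finset.sum_const, Finset.card_univ, nsmul_eq_mul]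

theorem exists_natCast_eq_card_mul_coeff_one {K : Type*} [Field K] {e : K[G]}
    (he : IsIdempotentElem e) (he0 : e ≠ 0) (he1 : e ≠ 1) :
    ∃ r : ℕ, 0 < r ∧ r < Fintype.card G ∧ (r : K) = Fintype.card G * e.coeff 1 := by
  have hE : IsIdempotentElem (mulLeft K e) := by
    rw [IsIdempotentElem, Module.End.mul_eq_comp, ← mulLeft_mul, he.eq]
  refine ⟨finrank K (range (mulLeft K e)), Nat.pos_of_ne_zero fun h => he0 ?_,
    lt_of_le_of_ne ?_ fun h => he1 ?_, by rw [← hE.isProj_range.trace, trace_mulLeft]⟩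
  · rw [Submodule.finrank_eq_zero, range_eq_bot] at h
    simpa using congr($h 1)
  · exact (Submodule.finrank_le _).trans_eq (finrank_eq_card_basis (basis G K))
  · obtain ⟨x, hx⟩ : (1 : K[G]) ∈ range (mulLeft K e) := by
      rw [Submodule.eq_top_of_finrank_eq (h.trans (finrank_eq_card_basis (basis G K)).symm)]
      trivial
    rw [mulLeft_apply] at hx
    calc e = e * (e * x) := by rw [hx, mul_one]
      _ = 1 := by rw [← mul_assoc, he.eq, hx]

theorem exists_mul_natCast_eq_card_mul_coeff_one [IsDomain R] {τ : R} (hτ : τ ≠ 0) {u : R[G]}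
    (hu : u * u = algebraMap R R[G] τ * u) (hu0 : u ≠ 0) (huτ : u ≠ algebraMap R R[G] τ) :
    ∃ r : ℕ, 0 < r ∧ r < Fintype.card G ∧ τ * r = Fintype.card G * u.coeff 1 := by
  let K := FractionRing R
  let φ := mapRingHom G (algebraMap R K)
  have hφ : Function.Injective φ :=
    map_injective (algebraMap R K : R →+ K) (IsFractionRing.injective R K)
  have hc : algebraMap R K τ ≠ 0 := (map_ne_zero_iff _ (IsFractionRing.injective R K)).2 hτ
  set e := (algebraMap R K τ)⁻¹ • φ u
  have hφτ : φ (algebraMap R R[G] τ) = algebraMap K K[G] (algebraMap R K τ) := by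
    simp [φ]
  have he : IsIdempotentElem e := by
    rw [IsIdempotentElem, smul_mul_smul, ← map_mul, hu, map_mul, hφτ, ← Algebra.smul_def,
      smul_smul, inv_mul_cancel_right₀ hc]
  have he0 : e ≠ 0 := smul_ne_zero (inv_ne_zero hc) (by simpa using hφ.ne hu0)
  have he1 : e ≠ 1 := by
    intro h
    apply huτ
    apply hφ
    rw [hφτ, Algebra.algebraMap_eq_smul_one, ← h, smul_inv_smul₀ hc]
  obtain ⟨r, hr0, hrG, hr⟩ := exists_natCast_eq_card_mul_coeff_one he he0 he1
  refine ⟨r, hr0, hrG, IsFractionRing.injective R K ?_⟩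
  rw [map_mul, map_mul, map_natCast, map_natCast, hr, coeff_smul, Finsupp.smul_apply,
    coeff_mapRingHom, smul_eq_mul, mul_left_comm, mul_inv_cancel_left₀ hc]

theorem eq_zero_or_eq_algebraMap_of_mul_self_eq [IsDomain R] {t θ : R} (ht : Irreducible t)
    {d j : ℕ} (hjd : j < d) (hG : (Fintype.card G).Prime)
    (hcard : (Fintype.card G : R) = t ^ d * θ) {u : R[G]}
    (hu : u * u = algebraMap R R[G] (t ^ j) * u) : u = 0 ∨ u = algebraMap R R[G] (t ^ j) := by
  by_contra! h
  obtain ⟨r, hr0, hrG, hr⟩ :=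
    exists_mul_natCast_eq_card_mul_coeff_one (pow_ne_zero j ht.ne_zero) hu h.1 h.2
  have htr : t ∣ (r : R) :=
    dvd_of_pow_mul_eq_pow_mul ht.ne_zero hjd (by rw [hr, hcard, mul_assoc])
  have htG : t ∣ (Fintype.card G : R) := hcard ▸ (dvd_pow_self t (by omega)).mul_right θ
  exact ht.not_dvd_natCast_of_coprime (Nat.coprime_of_lt_prime hr0.ne' hrG hG) htG htr

end MonoidAlgebra

theorem stmt_6_general (p : ℕ) [Fact p.Prime]
    (T : Type*) [Field T] [Algebra ℤ_[p] T]
    (t θ : ↥(integralClosure ℤ_[p] T)) (ht : Irreducible t)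
    (d : ℕ) (hp : (p : ↥(integralClosure ℤ_[p] T)) = t ^ d * θ)
    (j i : ℕ) (hjd : j < d) :
    letI R := ↥(integralClosure ℤ_[p] T)
    letI G := Multiplicative (ZMod p)
    letI a : MonoidAlgebra R G := MonoidAlgebra.of R G (Multiplicative.ofAdd 1)
    letI X : Ideal (MonoidAlgebra R G) :=
      Ideal.span {algebraMap R (MonoidAlgebra R G) (t ^ j), (a - 1) ^ i}
    ∀ N₁ N₂ : Submodule (MonoidAlgebra R G) ↥X, IsCompl N₁ N₂ → N₁ = ⊥ ∨ N₂ = ⊥ := by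
  intro N₁ N₂ hN
  have hcard : Fintype.card (Multiplicative (ZMod p)) = p := by simp
  have hG : (Fintype.card (Multiplicative (ZMod p))).Prime := by
    rw [hcard]
    exact Fact.out
  have hcardR : (Fintype.card (Multiplicative (ZMod p)) : integralClosure ℤ_[p] T) = t ^ d * θ := by
    rw [hcard, hp]
  refine Ideal.eq_bot_or_eq_bot_of_isCompl (Ideal.subset_span (Set.mem_insert _ _)) ?_ ?_ hN
  · exact MonoidAlgebra.algebraMap_mem_nonZeroDivisors (pow_ne_zero j ht.ne_zero)
  · intro u hu
    exact MonoidAlgebra.eq_zero_or_eq_algebraMap_of_mul_self_eq ht hjd hG hcardR hu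

/-- Let `R` be the ring of integers of a finite ramified extension
of `ℚ_p` with prime element `t` and ramification index `d > 1` (`p = t^d·θ`,
`θ` a unit), and `G = ⟨a | a^p = 1⟩`. For `1 ≤ j < d` and `1 ≤ i < p` the
`RG`-module `X_{ji} = t^j·RG + (a-1)^i·RG` is indecomposable. -/
theorem stmt_6 (p : ℕ) [Fact p.Prime]
    (T : Type*) [Field T] [Algebra ℚ_[p] T] [FiniteDimensional ℚ_[p] T]
    [Algebra ℤ_[p] T] [IsScalarTower ℤ_[p] ℚ_[p] T]
    (t θ : ↥(integralClosure ℤ_[p] T)) (ht : Irreducible t) (hθ : IsUnit θ)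
    (d : ℕ) (hd : 1 < d) (hp : (p : ↥(integralClosure ℤ_[p] T)) = t ^ d * θ)
    (j i : ℕ) (hj1 : 1 ≤ j) (hjd : j < d) (hi1 : 1 ≤ i) (hip : i < p) :
    letI R := ↥(integralClosure ℤ_[p] T)
    letI G := Multiplicative (ZMod p)
    letI a : MonoidAlgebra R G := MonoidAlgebra.of R G (Multiplicative.ofAdd 1)
    letI X : Ideal (MonoidAlgebra R G) :=
      Ideal.span {algebraMap R (MonoidAlgebra R G) (t ^ j), (a - 1) ^ i}
    ∀ N₁ N₂ : Submodule (MonoidAlgebra R G) ↥X, IsCompl N₁ N₂ → N₁ = ⊥ ∨ N₂ = ⊥ :=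
  stmt_6_general p T t θ ht d hp j i hjd
end

section
/- Let p be a prime, R a commutative ring, G = ⟨a | a^p = 1⟩ and RG its group ring. Then (a-1)^p = p·(a-1)·(α₀ + α₁(a-1) + ⋯ + α_{p-2}(a-1)^{p-2}) in RG for some integers α₀, …, α_{p-2} (depending only on p). -/
open Polynomial

private lemma stmt9_key (p : ℕ) (hp : p.Prime) :
    ∃ θ : Polynomial ℤ, (X ^ p - ((X + 1) ^ p - 1) : Polynomial ℤ)
        = C (p : ℤ) * X * θ ∧ θ.natDegree < p - 1 := by
  have hp2 := hp.two_le
  set f : Polynomial ℤ := X ^ p - ((X + 1) ^ p - 1) with hf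
  -- degree bound
  have hdeg : f.natDegree < p := by
    rcases eq_or_ne f 0 with h0 | h0
    · simpa [h0] using hp.pos
    have h1 : (X ^ p - (X + 1) ^ p : Polynomial ℤ).degree < p := by
      have := Polynomial.degree_sub_lt (p := (X ^ p : Polynomial ℤ))
        (q := ((X + 1) ^ p : Polynomial ℤ)) ?_ (pow_ne_zero _ Polynomial.X_ne_zero) ?_
      · simpa [Polynomial.degree_X_pow] using this
      · rw [Polynomial.degree_X_pow, Polynomial.degree_pow]
        have : ((X + 1 : Polynomial ℤ)).degree = 1 := by
          simpa using Polynomial.degree_X_add_C (1 : ℤ)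
        rw [this]; simp
      · rw [Polynomial.leadingCoeff_pow, Polynomial.leadingCoeff_pow]
        have : ((X + 1 : Polynomial ℤ)).leadingCoeff = 1 := by
          simpa using Polynomial.leadingCoeff_X_add_C (1 : ℤ)
        simp [this]
    have h2 : f.degree < p := by
      have : f = (X ^ p - (X + 1) ^ p) + 1 := by ring
      rw [this]
      refine lt_of_le_of_lt (Polynomial.degree_add_le _ _) (max_lt h1 ?_)
      exact lt_of_le_of_lt Polynomial.degree_one_le (by exact_mod_cast Nat.cast_pos.mpr hp.pos)
    exact (Polynomial.natDegree_lt_iff_degree_lt h0).mpr h2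
  -- divisibility by p
  haveI : Fact p.Prime := ⟨hp⟩
  have hmap : f.map (Int.castRingHom (ZMod p)) = 0 := by
    have : ((X : Polynomial (ZMod p)) + 1) ^ p = X ^ p + 1 ^ p := by
      exact add_pow_char _ _ _
    simp [hf, Polynomial.map_sub, Polynomial.map_pow, Polynomial.map_add, this]
  have hCp : C (p : ℤ) ∣ f := by
    rw [Polynomial.C_dvd_iff_dvd_coeff]
    intro i
    have := congrArg (fun q => Polynomial.coeff q i) hmap
    simp only [Polynomial.coeff_map, Polynomial.coeff_zero] at this
    exact_mod_cast (ZMod.intCast_zmod_eq_zero_iff_dvd _ _).mp this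
  obtain ⟨g, hg⟩ := hCp
  -- divisibility by X
  have hgX : X ∣ g := by
    rw [Polynomial.X_dvd_iff]
    have h0 : f.coeff 0 = 0 := by
      have : f.eval 0 = 0 := by simp [hf, hp.pos.ne']
      simpa [Polynomial.coeff_zero_eq_eval_zero] using this
    have : (p : ℤ) * g.coeff 0 = 0 := by
      have := congrArg (fun q => Polynomial.coeff q 0) hg
      simpa [Polynomial.coeff_C_mul, h0] using this.symm
    have hpne : (p : ℤ) ≠ 0 := Int.natCast_ne_zero.mpr hp.pos.ne'
    exact (mul_eq_zero.mp this).resolve_left hpne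
  obtain ⟨θ, hθ⟩ := hgX
  refine ⟨θ, by rw [hg, hθ, mul_assoc], ?_⟩
  rcases eq_or_ne θ 0 with h0 | h0
  · simpa [h0] using Nat.sub_pos_of_lt hp2
  · have hfθ : f = C (p : ℤ) * X * θ := by rw [hg, hθ, mul_assoc]
    have hpne : (C ((p : ℤ)) * X : Polynomial ℤ) ≠ 0 := by
      have hpne : (p : ℤ) ≠ 0 := Int.natCast_ne_zero.mpr hp.pos.ne'
      simp [hpne, hp.pos.ne', Polynomial.X_ne_zero]
    have := Polynomial.natDegree_mul hpne h0
    rw [← hfθ] at this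
    have hCX : (C ((p : ℤ)) * X : Polynomial ℤ).natDegree = 1 := by
      have hpne : (p : ℤ) ≠ 0 := Int.natCast_ne_zero.mpr hp.pos.ne'
      rw [Polynomial.natDegree_C_mul hpne, Polynomial.natDegree_X]
    rw [hCX] at this
    omega

/-- For a prime `p` and any commutative ring `R`, in the group ring
`RG` of the cyclic group `G = ⟨a | a^p = 1⟩` one has
`(a-1)^p = p(a-1)(α₀ + α₁(a-1) + ⋯ + α_{p-2}(a-1)^{p-2})`
for integers `α₀, …, α_{p-2}` depending only on `p`. -/
theorem stmt_9 (p : ℕ) (hp : p.Prime) :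
    ∃ α : ℕ → ℤ, ∀ (R : Type*) [CommRing R],
      letI G := Multiplicative (ZMod p)
      letI a : MonoidAlgebra R G := MonoidAlgebra.of R G (Multiplicative.ofAdd 1)
      (a - 1) ^ p =
        (p : MonoidAlgebra R G) * (a - 1) *
          (∑ i ∈ Finset.range (p - 1), (α i : MonoidAlgebra R G) * (a - 1) ^ i) := by
  obtain ⟨θ, hθ, hθdeg⟩ := stmt9_key p hp
  refine ⟨fun i => θ.coeff i, fun R _ => ?_⟩
  set G := Multiplicative (ZMod p)
  set a : MonoidAlgebra R G := MonoidAlgebra.of R G (Multiplicative.ofAdd 1) with ha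
  have hap : a ^ p = 1 := by
    rw [ha, ← map_pow]
    have : (Multiplicative.ofAdd (1 : ZMod p)) ^ p = 1 := by
      rw [← ofAdd_nsmul]
      simp [nsmul_eq_mul]
    rw [this, map_one]
  -- evaluate the polynomial identity at a - 1
  have := congrArg (Polynomial.aeval (a - 1)) hθ
  simp only [map_sub, map_add, map_pow, map_mul, map_one, Polynomial.aeval_X,
    Polynomial.aeval_C] at this
  rw [sub_add_cancel, hap, sub_self, sub_zero] at this
  rw [this]
  congr 1
  · congr 1
    simp [algebraMap_int_eq, map_natCast]
  · rw [Polynomial.aeval_eq_sum_range' hθdeg (a - 1)]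
    refine Finset.sum_congr rfl fun i _ => ?_
    simp [zsmul_eq_mul]
end

section
/- Let p be an odd prime, R the ring of integers of a finite ramified extension of ℚ_p with prime element t and ramification index d > 1, G = ⟨a | a^p = 1⟩. The modules X_{ji} = t^j RG + (a-1)^i RG for j = 1, …, d-1 and i = 1, …, (p-1)/2 are pairwise non-isomorphic as RG-modules. -/
/-!
Write `y = a - 1`. Since `(1 + y) ^ p = 1` and `p` divides the inner binomial coefficients,
`y ^ p ∈ p y RG ⊆ t ^ d y RG`; on the other hand, for `s < p` the coefficient of `a ^ s` in
`y ^ s` is `1`, so `y ^ s ∉ t RG`.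

Both indices are then read off from properties of `X_{ji}` that only involve its `RG`-module
structure:
* `y ^ (p - i) X_{ji} ⊆ t X_{ji}`, whereas `y ^ (p - i) y ^ i' ∉ t RG` for `i' < i`;
* `t ^ j y ^ i ∈ y X_{ji}` but `y ^ i ∉ y X_{ji} + t RG`, because `y` is nilpotent modulo `t`;
  whereas for `j < j'`, `t ^ j ξ ∈ y X_{j'i'}` forces `ξ ∈ y X_{j'i'} + t X_{j'i'}`, as one sees
  by applying the augmentation and comparing coefficients of `a ^ (p - 1)` in
  `t ^ j ξ y ^ (p - 1 - i')`.
-/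

open MonoidAlgebra

namespace Ideal

variable {S : Type*} [CommSemiring S] {I J : Ideal S}

theorem forall_exists_mul_eq_mul_of_linearEquiv (f : I ≃ₗ[S] J) {b c : S}
    (h : ∀ x ∈ I, ∃ z ∈ I, b * x = c * z) : ∀ x ∈ J, ∃ z ∈ J, b * x = c * z := by
  intro x hx
  obtain ⟨z, hz, hbz⟩ := h _ (f.symm ⟨x, hx⟩).2
  refine ⟨f ⟨z, hz⟩, (f _).2, ?_⟩
  have := congrArg (fun w => (f w : S))
    (Subtype.ext hbz : b • f.symm ⟨x, hx⟩ = c • ⟨z, hz⟩)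
  simpa only [map_smul, LinearEquiv.apply_symm_apply, Submodule.coe_smul, smul_eq_mul]
    using this

theorem forall_exists_eq_mul_add_mul_of_linearEquiv (f : I ≃ₗ[S] J) {b c e : S}
    (h : ∀ ξ ∈ I, ∀ χ ∈ I, e * ξ = b * χ → ∃ α ∈ I, ∃ β ∈ I, ξ = b * α + c * β) :
    ∀ ξ ∈ J, ∀ χ ∈ J, e * ξ = b * χ → ∃ α ∈ J, ∃ β ∈ J, ξ = b * α + c * β := by
  intro ξ hξ χ hχ hrel
  have hrel' := congrArg (fun w => (f.symm w : S))
    (Subtype.ext hrel : e • ⟨ξ, hξ⟩ = b • ⟨χ, hχ⟩)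
  simp only [map_smul, Submodule.coe_smul, smul_eq_mul] at hrel'
  obtain ⟨α, hα, β, hβ, hdec⟩ := h _ (f.symm ⟨ξ, hξ⟩).2 _ (f.symm ⟨χ, hχ⟩).2 hrel'
  refine ⟨f ⟨α, hα⟩, (f _).2, f ⟨β, hβ⟩, (f _).2, ?_⟩
  have := congrArg (fun w => (f w : S))
    (Subtype.ext hdec : f.symm ⟨ξ, hξ⟩ = b • ⟨α, hα⟩ + c • ⟨β, hβ⟩)
  simpa only [map_add, map_smul, LinearEquiv.apply_symm_apply, Submodule.coe_add,
    Submodule.coe_smul, smul_eq_mul] using this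

end Ideal

namespace CyclicGroupRing

variable {R : Type*} [CommRing R] {p : ℕ}

local notation "A" => MonoidAlgebra R (Multiplicative (ZMod p))

variable (R p) in
noncomputable def gen : A := of R _ (Multiplicative.ofAdd 1)

theorem gen_pow (k : ℕ) : (gen R p) ^ k = single (Multiplicative.ofAdd (k : ZMod p)) 1 := by
  rw [gen, of_apply, single_pow, one_pow, ← ofAdd_nsmul, nsmul_one]

theorem gen_pow_prime : (gen R p) ^ p = 1 := by
  rw [gen_pow, ZMod.natCast_self]
  rfl

theorem coeff_gen_sub_one_pow [NeZero p] {s : ℕ} (hs : s < p) :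
    ((gen R p - 1) ^ s).coeff (Multiplicative.ofAdd (s : ZMod p)) = 1 := by
  classical
  have hterm (k : ℕ) : (gen R p) ^ k * (-1) ^ (s - k) * (s.choose k : A) =
      single (Multiplicative.ofAdd (k : ZMod p)) ((-1 : R) ^ (s - k) * s.choose k) := by
    have : ((-1 : A) ^ (s - k) * (s.choose k : A)) =
        algebraMap R A ((-1) ^ (s - k) * s.choose k) := by
      rw [map_mul, map_pow, map_neg, map_one, map_natCast]
    rw [mul_assoc, this, gen_pow, coe_algebraMap, Function.comp_apply, single_mul_single,
      one_mul, mul_one]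
    rfl
  simp only [sub_eq_add_neg, add_pow, hterm, coeff_sum, coeff_single,
    Finsupp.finsetSum_apply, Finsupp.single_apply]
  rw [Finset.sum_eq_single s (fun k hk hks => if_neg ?_) (by simp)]
  · simp
  · rw [Multiplicative.ofAdd.injective.eq_iff, ← (ZMod.val_injective _).eq_iff,
      ZMod.val_cast_of_lt hs, ZMod.val_cast_of_lt (by grind)]
    exact hks

theorem dvd_of_algebraMap_dvd_mul_gen_sub_one_pow [NeZero p] {s : ℕ} (hs : s < p) {c r : R}
    (h : algebraMap R A c ∣ algebraMap R A r * (gen R p - 1) ^ s) : c ∣ r := by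
  obtain ⟨w, hw⟩ := h
  have := congrArg (fun z : A => z.coeff (Multiplicative.ofAdd (s : ZMod p))) hw
  simp only [coe_algebraMap, Function.comp_apply, Algebra.algebraMap_self_apply,
    coeff_single_one_mul, coeff_gen_sub_one_pow hs, mul_one] at this
  exact ⟨_, this⟩

theorem not_algebraMap_dvd_gen_sub_one_pow [NeZero p] {t : R} (ht : ¬IsUnit t) {s : ℕ}
    (hs : s < p) :
    ¬algebraMap R A t ∣ (gen R p - 1) ^ s := fun h =>
  ht <| isUnit_of_dvd_one <| dvd_of_algebraMap_dvd_mul_gen_sub_one_pow hs <| by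
    rwa [map_one, one_mul]

theorem algebraMap_mul_gen_sub_one_dvd_pow_prime [Fact p.Prime] {c : R} (hc : c ∣ (p : R)) :
    algebraMap R A c * (gen R p - 1) ∣ (gen R p - 1) ^ p := by
  obtain ⟨r, hr⟩ := exists_add_pow_prime_eq (Fact.out : p.Prime) (gen R p - 1) 1
  rw [sub_add_cancel, gen_pow_prime, one_pow] at hr
  obtain ⟨q, hq⟩ : algebraMap R A c ∣ (p : A) := map_natCast (algebraMap R A) p ▸ map_dvd _ hc
  exact ⟨-(q * r), by linear_combination -hr - (gen R p - 1) * r * hq⟩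

variable (R p) in
noncomputable def augmentation : A →ₐ[R] R := lift R R _ 1

theorem augmentation_gen : augmentation R p (gen R p) = 1 := by
  simp [augmentation, gen]

theorem augmentation_gen_sub_one : augmentation R p (gen R p - 1) = 0 := by
  rw [map_sub, map_one, augmentation_gen, sub_self]

theorem gen_sub_one_dvd_sub_augmentation [NeZero p] (z : A) :
    gen R p - 1 ∣ z - algebraMap R A (augmentation R p z) := by
  induction z using MonoidAlgebra.induction_linear with
  | zero => simp
  | add f g hf hg =>
    rw [map_add, map_add, add_sub_add_comm]
    exact dvd_add hf hg
  | single g r =>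
    have hg : single g r = algebraMap R A r * gen R p ^ (Multiplicative.toAdd g).val := by
      rw [gen_pow, ZMod.natCast_zmod_val, coe_algebraMap, Function.comp_apply, single_mul_single,
        one_mul, mul_one]
      rfl
    rw [hg, map_mul, AlgHom.commutes, map_pow, augmentation_gen, one_pow, mul_one,
      Algebra.algebraMap_self_apply, ← mul_sub_one]
    exact dvd_mul_of_dvd_right (by simpa using sub_dvd_pow_sub_pow (gen R p) 1 _) _

variable (p) in
noncomputable def X (t : R) (j i : ℕ) : Ideal A :=
  Ideal.span {algebraMap R A (t ^ j), (gen R p - 1) ^ i}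

theorem algebraMap_pow_mem_X (t : R) (j i : ℕ) : algebraMap R A (t ^ j) ∈ X p t j i :=
  Ideal.subset_span (by simp)

theorem gen_sub_one_pow_mem_X (t : R) (j i : ℕ) : (gen R p - 1) ^ i ∈ X p t j i :=
  Ideal.subset_span (by simp)

theorem exists_gen_sub_one_pow_mul_eq_mul [Fact p.Prime] {t : R} {j i : ℕ} (hj : 1 ≤ j)
    (htp : t ^ (j + 1) ∣ (p : R)) (hi : 2 * i ≤ p) {ξ : A} (hξ : ξ ∈ X p t j i) :
    ∃ χ ∈ X p t j i, (gen R p - 1) ^ (p - i) * ξ = algebraMap R A t * χ := by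
  obtain ⟨u, v, rfl⟩ := Ideal.mem_span_pair.mp hξ
  obtain ⟨w, hw⟩ := algebraMap_mul_gen_sub_one_dvd_pow_prime htp
  obtain ⟨j, rfl⟩ := Nat.exists_eq_add_of_le' hj
  obtain ⟨k, hk⟩ := Nat.exists_eq_add_of_le hi
  set y := gen R p - 1
  refine ⟨u * algebraMap R A (t ^ j) * y ^ k * y ^ i + v * y * w * algebraMap R A (t ^ (j + 1)),
    Ideal.add_mem _ (Ideal.mul_mem_left _ _ (gen_sub_one_pow_mem_X t _ i))
      (Ideal.mul_mem_left _ _ (algebraMap_pow_mem_X t _ i)), ?_⟩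
  rw [show p - i = k + i by omega]
  have hyp : y ^ (k + i + i) = y ^ p := congrArg (y ^ ·) (by omega)
  simp only [map_pow] at hw ⊢
  linear_combination v * (hyp.trans hw)

theorem not_exists_gen_sub_one_pow_eq [Fact p.Prime] {t : R} (ht : ¬IsUnit t)
    (htp : t ∣ (p : R)) {j i : ℕ} (hj : 1 ≤ j) (hi : i < p) :
    ¬∃ α ∈ X p t j i, ∃ β : A, (gen R p - 1) ^ i = (gen R p - 1) * α + algebraMap R A t * β := by
  rintro ⟨α, hα, β, h⟩
  obtain ⟨u, v, rfl⟩ := Ideal.mem_span_pair.mp hα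
  obtain ⟨j, rfl⟩ := Nat.exists_eq_add_of_le' hj
  set y := gen R p - 1
  let π := Ideal.Quotient.mk (Ideal.span {algebraMap R A t})
  have hπ (z : A) : π z = 0 ↔ algebraMap R A t ∣ z :=
    Ideal.Quotient.eq_zero_iff_mem.trans Ideal.mem_span_singleton
  have hnil : IsNilpotent (π (y * v)) := ⟨p, by
    rw [← map_pow, hπ, mul_pow]
    exact dvd_mul_of_dvd_left
      ((dvd_mul_right _ _).trans (algebraMap_mul_gen_sub_one_dvd_pow_prime htp)) _⟩
  have hker : π (y ^ i) * (1 - π (y * v)) = 0 := by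
    rw [← map_one π, ← map_sub, ← map_mul, hπ]
    refine ⟨u * y * algebraMap R A (t ^ j) + β, ?_⟩
    simp only [map_pow] at h ⊢
    linear_combination h
  exact not_algebraMap_dvd_gen_sub_one_pow ht hi <|
    (hπ _).mp <| (hnil.isUnit_one_sub.mul_left_eq_zero).mp hker

theorem dvd_augmentation_of_dvd_mul_gen_sub_one_pow [Fact p.Prime] [IsDomain R] {t : R}
    (ht : t ≠ 0) (htp : t ∣ (p : R)) {m : ℕ} {v : A}
    (h : algebraMap R A (t ^ (m + 1)) ∣ algebraMap R A (t ^ m) * v * (gen R p - 1) ^ (p - 1)) :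
    t ∣ augmentation R p v := by
  obtain ⟨v₁, hv₁⟩ := gen_sub_one_dvd_sub_augmentation v
  set y := gen R p - 1
  have hy : y * y ^ (p - 1) = y ^ p := by
    rw [← pow_succ', Nat.sub_add_cancel (Fact.out : p.Prime).one_le]
  have htyp : algebraMap R A (t ^ (m + 1)) ∣ algebraMap R A (t ^ m) * v₁ * y ^ p := by
    rw [pow_succ, map_mul, mul_assoc]
    exact mul_dvd_mul_left _ (dvd_mul_of_dvd_right
      ((dvd_mul_right _ _).trans (algebraMap_mul_gen_sub_one_dvd_pow_prime htp)) _)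
  have key :
      algebraMap R A (t ^ (m + 1)) ∣ algebraMap R A (t ^ m * augmentation R p v) * y ^ (p - 1) := by
    have : algebraMap R A (t ^ m * augmentation R p v) * y ^ (p - 1) =
        algebraMap R A (t ^ m) * v * y ^ (p - 1) - algebraMap R A (t ^ m) * v₁ * y ^ p := by
      rw [map_mul, ← hy]
      linear_combination -(algebraMap R A (t ^ m) * y ^ (p - 1)) * hv₁
    rw [this]
    exact dvd_sub h htyp
  rw [← mul_dvd_mul_iff_left (pow_ne_zero m ht), ← pow_succ]
  exact dvd_of_algebraMap_dvd_mul_gen_sub_one_pow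
    (Nat.sub_lt (Fact.out : p.Prime).pos one_pos) key

theorem exists_eq_gen_sub_one_mul_add_of_mul_eq [Fact p.Prime] [IsDomain R] {t : R} (ht : t ≠ 0)
    {m j i : ℕ} (hmj : m < j) (htp : t ^ (m + 1) ∣ (p : R)) (hi : 1 ≤ i) (hip : i < p) {ξ χ : A}
    (hξ : ξ ∈ X p t j i) (hχ : χ ∈ X p t j i)
    (h : algebraMap R A (t ^ m) * ξ = (gen R p - 1) * χ) :
    ∃ α ∈ X p t j i, ∃ β ∈ X p t j i, ξ = (gen R p - 1) * α + algebraMap R A t * β := by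
  obtain ⟨u, v, rfl⟩ := Ideal.mem_span_pair.mp hξ
  obtain ⟨g, g', rfl⟩ := Ideal.mem_span_pair.mp hχ
  have hu : augmentation R p u = 0 := by
    have := congrArg (augmentation R p) h
    simp only [map_mul, map_add, map_pow, AlgHom.commutes, Algebra.algebraMap_self_apply,
      augmentation_gen_sub_one, zero_pow (by omega : i ≠ 0), mul_zero, add_zero] at this
    simpa [ht] using this
  obtain ⟨u₁, hu₁⟩ := gen_sub_one_dvd_sub_augmentation u
  obtain ⟨v₁, hv₁⟩ := gen_sub_one_dvd_sub_augmentation v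
  obtain ⟨w, hw⟩ := algebraMap_mul_gen_sub_one_dvd_pow_prime htp
  obtain ⟨k, rfl⟩ := Nat.exists_eq_add_of_lt hmj
  obtain ⟨q, hq⟩ := Nat.exists_eq_add_of_lt hip
  set y := gen R p - 1
  have hyp : y ^ (i + q + 1) = y ^ p := congrArg (y ^ ·) hq.symm
  have hyp' : y ^ (i + q) = y ^ (p - 1) := congrArg (y ^ ·) (by omega)
  -- multiplied by `y ^ q = y ^ (p - 1 - i)`, both sides of `h` are visibly divisible by
  -- `t ^ (m + 1)`, except for the term `t ^ m * v * y ^ (p - 1)`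
  obtain ⟨e, he⟩ : t ∣ augmentation R p v := dvd_augmentation_of_dvd_mul_gen_sub_one_pow (m := m)
    ht ((dvd_pow_self t m.succ_ne_zero).trans htp)
    ⟨g * algebraMap R A (t ^ k) * y ^ (q + 1) + g' * y * w
      - u * algebraMap R A (t ^ (m + k)) * y ^ q, by
      rw [← hyp']
      simp only [map_pow] at h hw ⊢
      linear_combination y ^ q * h + g' * (hyp.trans hw)⟩
  rw [hu, map_zero, sub_zero] at hu₁
  rw [he, map_mul] at hv₁
  refine ⟨u₁ * algebraMap R A (t ^ (m + k + 1)) + v₁ * y ^ i,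
    Ideal.mem_span_pair.mpr ⟨u₁, v₁, rfl⟩, algebraMap R A e * y ^ i,
    Ideal.mul_mem_left _ _ (gen_sub_one_pow_mem_X t _ i), ?_⟩
  linear_combination algebraMap R A (t ^ (m + k + 1)) * hu₁ + y ^ i * hv₁

theorem i_le_of_linearEquiv [Fact p.Prime] {t : R} (ht : ¬IsUnit t) {j i j' i' : ℕ}
    (hj : 1 ≤ j) (htp : t ^ (j + 1) ∣ (p : R)) (hi : 2 * i ≤ p)
    (f : X p t j i ≃ₗ[A] X p t j' i') : i ≤ i' := by
  by_contra! hlt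
  obtain ⟨z, -, hz⟩ := Ideal.forall_exists_mul_eq_mul_of_linearEquiv f
    (fun ξ hξ => exists_gen_sub_one_pow_mul_eq_mul hj htp hi hξ) _ (gen_sub_one_pow_mem_X t j' i')
  exact not_algebraMap_dvd_gen_sub_one_pow ht (show p - i + i' < p by omega)
    ⟨z, by rw [pow_add, hz]⟩

theorem j_le_of_linearEquiv [Fact p.Prime] [IsDomain R] {t : R} (ht : t ≠ 0) (htu : ¬IsUnit t)
    {j i j' i' : ℕ} (hj : 1 ≤ j) (htp : t ^ (j + 1) ∣ (p : R)) (hi : 1 ≤ i) (hip : i < p)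
    (hi' : 1 ≤ i') (hip' : i' < p) (f : X p t j i ≃ₗ[A] X p t j' i') : j' ≤ j := by
  by_contra! hlt
  apply not_exists_gen_sub_one_pow_eq htu ((dvd_pow_self t j.succ_ne_zero).trans htp) hj hip
  obtain ⟨i, rfl⟩ := Nat.exists_eq_add_of_le' hi
  obtain ⟨α, hα, β, -, h⟩ := Ideal.forall_exists_eq_mul_add_mul_of_linearEquiv f.symm
    (fun ξ hξ χ hχ h => exists_eq_gen_sub_one_mul_add_of_mul_eq ht hlt htp hi' hip' hξ hχ h)
    _ (gen_sub_one_pow_mem_X t j _) _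
    (Ideal.mul_mem_right ((gen R p - 1) ^ i) _ (algebraMap_pow_mem_X t j (i + 1)))
    (by ring)
  exact ⟨α, hα, β, h⟩

end CyclicGroupRing

theorem stmt_10_general (p : ℕ) [Fact p.Prime] (T : Type*) [Field T] [Algebra ℤ_[p] T]
    (t θ : ↥(integralClosure ℤ_[p] T)) (ht : Irreducible t)
    (d : ℕ) (hp : (p : ↥(integralClosure ℤ_[p] T)) = t ^ d * θ)
    (j i j' i' : ℕ) (hj1 : 1 ≤ j) (hjd : j ≤ d - 1) (hj1' : 1 ≤ j') (hjd' : j' ≤ d - 1)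
    (hi1 : 1 ≤ i) (hip : i ≤ (p - 1) / 2) (hi1' : 1 ≤ i') (hip' : i' ≤ (p - 1) / 2)
    (hne : (j, i) ≠ (j', i')) :
    letI R := ↥(integralClosure ℤ_[p] T)
    letI G := Multiplicative (ZMod p)
    letI a : MonoidAlgebra R G := MonoidAlgebra.of R G (Multiplicative.ofAdd 1)
    letI X : Ideal (MonoidAlgebra R G) :=
      Ideal.span {algebraMap R (MonoidAlgebra R G) (t ^ j), (a - 1) ^ i}
    letI X' : Ideal (MonoidAlgebra R G) :=
      Ideal.span {algebraMap R (MonoidAlgebra R G) (t ^ j'), (a - 1) ^ i'}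
    IsEmpty (↥X ≃ₗ[MonoidAlgebra R G] ↥X') := by
  have htp {k : ℕ} (hk1 : 1 ≤ k) (hk : k ≤ d - 1) :
      t ^ (k + 1) ∣ (p : ↥(integralClosure ℤ_[p] T)) :=
    hp ▸ (pow_dvd_pow t (by omega)).mul_right θ
  have h2i : 2 * i ≤ p := by omega
  have h2i' : 2 * i' ≤ p := by omega
  refine ⟨fun f => hne (Prod.ext (le_antisymm ?_ ?_) (le_antisymm ?_ ?_))⟩
  · exact CyclicGroupRing.j_le_of_linearEquiv ht.ne_zero ht.not_isUnit hj1' (htp hj1' hjd')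
      hi1' (by omega) hi1 (by omega) f.symm
  · exact CyclicGroupRing.j_le_of_linearEquiv ht.ne_zero ht.not_isUnit hj1 (htp hj1 hjd)
      hi1 (by omega) hi1' (by omega) f
  · exact CyclicGroupRing.i_le_of_linearEquiv ht.not_isUnit hj1 (htp hj1 hjd) h2i f
  · exact CyclicGroupRing.i_le_of_linearEquiv ht.not_isUnit hj1' (htp hj1' hjd') h2i' f.symm

/-- Let `p` be an odd prime and `R` the ring of integers of a
finite ramified extension of `ℚ_p` with prime element `t` and ramification
index `d > 1`, `G = ⟨a | a^p = 1⟩`. The `RG`-modules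
`X_{ji} = t^j·RG + (a-1)^i·RG`, `1 ≤ j ≤ d-1`, `1 ≤ i ≤ (p-1)/2`, are pairwise
non-isomorphic. -/
theorem stmt_10 (p : ℕ) [Fact p.Prime] (hodd : p ≠ 2)
    (T : Type*) [Field T] [Algebra ℚ_[p] T] [FiniteDimensional ℚ_[p] T]
    [Algebra ℤ_[p] T] [IsScalarTower ℤ_[p] ℚ_[p] T]
    (t θ : ↥(integralClosure ℤ_[p] T)) (ht : Irreducible t) (hθ : IsUnit θ)
    (d : ℕ) (hd : 1 < d) (hp : (p : ↥(integralClosure ℤ_[p] T)) = t ^ d * θ)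
    (j i j' i' : ℕ) (hj1 : 1 ≤ j) (hjd : j ≤ d - 1) (hj1' : 1 ≤ j') (hjd' : j' ≤ d - 1)
    (hi1 : 1 ≤ i) (hip : i ≤ (p - 1) / 2) (hi1' : 1 ≤ i') (hip' : i' ≤ (p - 1) / 2)
    (hne : (j, i) ≠ (j', i')) :
    letI R := ↥(integralClosure ℤ_[p] T)
    letI G := Multiplicative (ZMod p)
    letI a : MonoidAlgebra R G := MonoidAlgebra.of R G (Multiplicative.ofAdd 1)
    letI X : Ideal (MonoidAlgebra R G) :=
      Ideal.span {algebraMap R (MonoidAlgebra R G) (t ^ j), (a - 1) ^ i}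
    letI X' : Ideal (MonoidAlgebra R G) :=
      Ideal.span {algebraMap R (MonoidAlgebra R G) (t ^ j'), (a - 1) ^ i'}
    IsEmpty (↥X ≃ₗ[MonoidAlgebra R G] ↥X') :=
  stmt_10_general p T t θ ht d hp j i j' i' hj1 hjd hj1' hjd' hi1 hip hi1' hip' hne
end

section
/- Let p be a prime, R the ring of integers of a finite ramified extension of ℚ_p with residue field R̄ = R/(tR) where t is a prime element, and G = ⟨a | a^p = 1⟩. For 1 ≤ j < d (d the ramification index) and 1 ≤ i < p, the reduction X̄_{ji} = X_{ji}/(t X_{ji}) of X_{ji} = t^j RG + (a-1)^i RG is isomorphic as an R̄G-module to V_i ⊕ V_{p-i}, where V_k = R̄G/((a-1)^k R̄G). -/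
/-!
Write `π = a - 1`. Multiplication by `t ^ j` and by `π ^ i` maps `RG/(t, π^i) × RG/(t, π^{p-i})`
onto `X/tX`; it is well defined because `π ^ p ∈ p·RG ⊆ t^{j+1}·RG` (Frobenius, as `a ^ p = 1`).
It is injective because, modulo `t`, the annihilator of `π ^ i` is `(π ^ {p-i})` (as
`R̄G ≅ R̄[x]/((x-1)^p)`), and this lets one cancel `t` step by step:
`u t^m ∈ (t^{m+1}, π^i)` forces `u t^{m-1} ∈ (t^m, π^i)` for `1 ≤ m ≤ j`.
-/

section Reduction

variable {A : Type*} [CommRing A] {τ x y : A} {j : ℕ}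

theorem mem_span_pair_of_mul_pow_mem (hτ : IsLeftRegular τ)
    (hx : ∀ w, w * x ∈ Ideal.span {τ} → w ∈ Ideal.span {τ, y})
    (hxy : x * y ∈ Ideal.span {τ ^ (j + 1)}) {u : A} {m : ℕ} (hm : m ≤ j)
    (hu : u * τ ^ m ∈ Ideal.span {τ ^ (m + 1), x}) : u ∈ Ideal.span {τ, x} := by
  induction m with
  | zero => simpa using hu
  | succ m ih =>
    obtain ⟨a, b, hab⟩ := Ideal.mem_span_pair.mp hu
    obtain ⟨z, hz⟩ := Ideal.mem_span_singleton'.mp hxy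
    have hbx : b * x ∈ Ideal.span {τ} :=
      Ideal.mem_span_singleton'.mpr ⟨u * τ ^ m - a * τ ^ (m + 1), by linear_combination -hab⟩
    obtain ⟨c, e, hce⟩ := Ideal.mem_span_pair.mp (hx b hbx)
    have hτj : τ ^ (j + 1) = τ * τ ^ (m + 1) * τ ^ (j - m - 1) := by
      rw [← pow_succ', ← pow_add]; congr 1; omega
    refine ih (by omega) (Ideal.mem_span_pair.mpr ⟨a + z * e * τ ^ (j - m - 1), c, hτ ?_⟩)
    linear_combination hab + x * hce + e * hz - z * e * hτj

theorem mem_span_pair_of_add_mem_span_mul (hτ : IsLeftRegular τ) (hj : 1 ≤ j)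
    (hx : ∀ w, w * x ∈ Ideal.span {τ} → w ∈ Ideal.span {τ, y})
    (hxy : x * y ∈ Ideal.span {τ ^ (j + 1)}) {u v : A}
    (h : u * τ ^ j + v * x ∈ Ideal.span {τ} * Ideal.span {τ ^ j, x}) :
    u ∈ Ideal.span {τ, x} ∧ v ∈ Ideal.span {τ, y} := by
  obtain ⟨s, hs, hτs⟩ := Ideal.mem_span_singleton_mul.mp h
  obtain ⟨α, β, hαβ⟩ := Ideal.mem_span_pair.mp hs
  have hτj : τ ^ j = τ * τ ^ (j - 1) := by rw [← pow_succ']; congr 1; omega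
  refine ⟨mem_span_pair_of_mul_pow_mem hτ hx hxy le_rfl ?_, hx v ?_⟩
  · exact Ideal.mem_span_pair.mpr ⟨α, τ * β - v, by linear_combination τ * hαβ + hτs⟩
  · exact Ideal.mem_span_singleton'.mpr ⟨α * τ ^ j + β * x - u * τ ^ (j - 1), by
      linear_combination τ * hαβ + hτs + u * hτj⟩

theorem nonempty_map_mkQ_span_pair_equiv_prod (hτ : IsLeftRegular τ) (hj : 1 ≤ j)
    (hx : ∀ w, w * x ∈ Ideal.span {τ} → w ∈ Ideal.span {τ, y})
    (hxy : x * y ∈ Ideal.span {τ ^ (j + 1)}) :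
    Nonempty (Submodule.map (Ideal.span {τ} * Ideal.span {τ ^ j, x}).mkQ
        (Ideal.span {τ ^ j, x}) ≃ₗ[A] (A ⧸ Ideal.span {τ, x}) × (A ⧸ Ideal.span {τ, y})) := by
  set X := Ideal.span {τ ^ j, x}
  set N := Ideal.span {τ} * X
  have hτX : ∀ g ∈ X, τ * g ∈ N := fun _ ↦ Ideal.mul_mem_mul (Ideal.mem_span_singleton_self τ)
  have hker : ∀ {a b g : A}, a * g ∈ N → b * g ∈ N →
      Ideal.span {a, b} ≤ LinearMap.ker (N.mkQ ∘ₗ LinearMap.toSpanSingleton A A g) := by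
    intro a b g ha hb
    rw [Ideal.span_le]
    rintro _ (rfl | rfl) <;> simpa [← map_mul, Ideal.Quotient.eq_zero_iff_mem]
  have hτjX : τ ^ j ∈ X := Ideal.subset_span (Set.mem_insert _ _)
  have hxX : x ∈ X := Ideal.subset_span (Set.mem_insert_of_mem _ rfl)
  have h₁ := hker (g := τ ^ j) (hτX _ hτjX) <| by
    have : x * τ ^ j = τ * (τ ^ (j - 1) * x) := by
      rw [← mul_assoc, ← pow_succ', Nat.sub_add_cancel hj, mul_comm]
    exact this ▸ hτX _ (X.mul_mem_left _ hxX)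
  have h₂ := hker (g := x) (hτX _ hxX) <| by
    obtain ⟨z, hz⟩ := Ideal.mem_span_singleton'.mp hxy
    have : y * x = τ * (z * τ ^ j) := by rw [mul_comm, ← hz]; ring
    exact this ▸ hτX _ (X.mul_mem_left _ hτjX)
  set F := (Submodule.liftQ _ _ h₁).coprod (Submodule.liftQ _ _ h₂)
  have hrange : LinearMap.range F = Submodule.map N.mkQ X := by
    rw [LinearMap.range_coprod, Submodule.range_liftQ, Submodule.range_liftQ, LinearMap.range_comp,
      LinearMap.range_comp, ← LinearMap.span_singleton_eq_range,
      ← LinearMap.span_singleton_eq_range, ← Submodule.map_sup, ← Ideal.span_insert]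
  have hinj : Function.Injective F := by
    rw [← LinearMap.ker_eq_bot, eq_bot_iff]
    rintro ⟨u', v'⟩ huv
    obtain ⟨u, rfl⟩ := Submodule.Quotient.mk_surjective _ u'
    obtain ⟨v, rfl⟩ := Submodule.Quotient.mk_surjective _ v'
    have hF : F (Submodule.Quotient.mk u, Submodule.Quotient.mk v) = N.mkQ (u * τ ^ j + v * x) :=
      rfl
    have hN : u * τ ^ j + v * x ∈ N := by
      rwa [LinearMap.mem_ker, hF, Submodule.mkQ_apply, Submodule.Quotient.mk_eq_zero] at huv
    obtain ⟨hu, hv⟩ := mem_span_pair_of_add_mem_span_mul hτ hj hx hxy hN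
    simp [Ideal.Quotient.eq_zero_iff_mem, hu, hv]
  exact ⟨((LinearEquiv.ofInjective F hinj).trans (LinearEquiv.ofEq _ _ hrange)).symm⟩

end Reduction

open Polynomial

theorem sub_one_pow_mem_span_natCast {B : Type*} [CommRing B] {p : ℕ} (hp : p.Prime) {x : B}
    (hx : x ^ p = 1) : (x - 1) ^ p ∈ Ideal.span {(p : B)} := by
  set Q := B ⧸ Ideal.span {(p : B)}
  have hp0 : (p : Q) = 0 := by
    rw [← map_natCast (Ideal.Quotient.mk _), Ideal.Quotient.eq_zero_iff_mem]
    exact Ideal.mem_span_singleton_self _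
  rw [← Ideal.Quotient.eq_zero_iff_mem, map_pow, map_sub, map_one]
  cases subsingleton_or_nontrivial Q
  · exact Subsingleton.elim _ _
  have := Fact.mk hp
  have : CharP Q p := (CharP.charP_iff_prime_eq_zero hp).mpr hp0
  rw [sub_pow_char, one_pow, ← map_pow, hx, map_one, sub_self]

theorem Polynomial.mem_map_C_of_mul_monic_mem {R : Type*} [CommRing R] {I : Ideal R}
    {f g : R[X]} (hg : g.Monic) (h : f * g ∈ I.map C) : f ∈ I.map C := by
  rw [← Ideal.mk_ker (I := I), ← ker_mapRingHom, RingHom.mem_ker] at h ⊢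
  rw [map_mul] at h
  exact (hg.map _).mul_left_eq_zero_iff.mp h

namespace CyclicGroupAlgebra

variable (p : ℕ) (S : Type*) [CommRing S]

noncomputable def gen : MonoidAlgebra S (Multiplicative (ZMod p)) :=
  MonoidAlgebra.of S (Multiplicative (ZMod p)) (Multiplicative.ofAdd 1)

theorem gen_pow (n : ℕ) :
    gen p S ^ n = MonoidAlgebra.single (Multiplicative.ofAdd (n : ZMod p)) 1 := by
  rw [gen, ← map_pow, MonoidAlgebra.of_apply, ← ofAdd_nsmul, nsmul_one]

theorem gen_pow_char : gen p S ^ p = 1 := by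
  rw [gen_pow, ZMod.natCast_self, ofAdd_zero, MonoidAlgebra.one_def]

theorem aeval_gen_surjective [NeZero p] : Function.Surjective (aeval (R := S) (gen p S)) := by
  intro f
  induction f using MonoidAlgebra.induction_on with
  | of g =>
    refine ⟨X ^ g.toAdd.val, ?_⟩
    rw [map_pow, aeval_X, gen_pow, ZMod.natCast_zmod_val, MonoidAlgebra.of_apply, ofAdd_toAdd]
  | add f g hf hg =>
    obtain ⟨F, rfl⟩ := hf
    obtain ⟨G, rfl⟩ := hg
    exact ⟨F + G, map_add _ _ _⟩
  | smul r f hf =>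
    obtain ⟨F, rfl⟩ := hf
    exact ⟨C r * F, by rw [map_mul, aeval_C, Algebra.smul_def]⟩

theorem coeff_aeval_gen [NeZero p] {P : S[X]} (hP : P.natDegree < p) {n : ℕ} (hn : n < p) :
    (aeval (gen p S) P).coeff (Multiplicative.ofAdd (n : ZMod p)) = P.coeff n := by
  simp only [aeval_eq_sum_range' hP, gen_pow, MonoidAlgebra.smul_single, smul_eq_mul, mul_one]
  rw [MonoidAlgebra.coeff_sum, Finset.sum_apply', Finset.sum_eq_single n]
  · simp [MonoidAlgebra.coeff_single]
  · intro m hm hmn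
    rw [MonoidAlgebra.coeff_single, Finsupp.single_eq_of_ne]
    rw [Ne, Multiplicative.ofAdd.injective.eq_iff, ZMod.natCast_eq_natCast_iff',
      Nat.mod_eq_of_lt hn, Nat.mod_eq_of_lt (Finset.mem_range.mp hm)]
    exact hmn.symm
  · exact fun h ↦ absurd (Finset.mem_range.mpr hn) h

theorem mem_map_C_of_aeval_gen_mem [NeZero p] {t : S} {P : S[X]} (hP : P.natDegree < p)
    (h : aeval (gen p S) P ∈
      Ideal.span {algebraMap S (MonoidAlgebra S (Multiplicative (ZMod p))) t}) :
    P ∈ (Ideal.span {t}).map C := by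
  obtain ⟨z, hz⟩ := Ideal.mem_span_singleton'.mp h
  refine Ideal.mem_map_C_iff.mpr fun n ↦ ?_
  rcases lt_or_ge n p with hn | hn
  · rw [← coeff_aeval_gen p S hP hn, ← hz, mul_comm, ← Algebra.smul_def,
      MonoidAlgebra.coeff_smul_apply, smul_eq_mul]
    exact Ideal.mul_mem_right _ _ (Ideal.mem_span_singleton_self t)
  · rw [coeff_eq_zero_of_natDegree_lt (hP.trans_le hn)]
    exact zero_mem _

theorem aeval_gen_mem_of_mem_map_C {t : S} {P : S[X]} (h : P ∈ (Ideal.span {t}).map C) :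
    aeval (gen p S) P ∈
      Ideal.span {algebraMap S (MonoidAlgebra S (Multiplicative (ZMod p))) t} := by
  obtain ⟨Q, rfl⟩ : C t ∣ P := (C_dvd_iff_dvd_coeff _ _).mpr fun n ↦
    Ideal.mem_span_singleton.mp (Ideal.mem_map_C_iff.mp h n)
  rw [map_mul, aeval_C]
  exact Ideal.mul_mem_right _ _ (Ideal.mem_span_singleton_self _)

theorem gen_sub_one_pow_char_mem_span [Fact p.Prime] {s : S} (hs : (p : S) ∈ Ideal.span {s}) :
    (gen p S - 1) ^ p ∈
      Ideal.span {algebraMap S (MonoidAlgebra S (Multiplicative (ZMod p))) s} := by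
  refine Ideal.span_singleton_le_span_singleton.mpr ?_
    (sub_one_pow_mem_span_natCast Fact.out (gen_pow_char p S))
  obtain ⟨c, hc⟩ := Ideal.mem_span_singleton.mp hs
  exact ⟨algebraMap S _ c, by rw [← map_natCast (algebraMap S _), hc, map_mul]⟩

theorem mem_span_pair_of_mul_gen_sub_one_pow_mem [Fact p.Prime] [Nontrivial S] {t : S}
    (hpt : (p : S) ∈ Ideal.span {t}) {k : ℕ} (hk : k ≤ p)
    {W : MonoidAlgebra S (Multiplicative (ZMod p))}
    (hW : W * (gen p S - 1) ^ k ∈ Ideal.span {algebraMap S _ t}) :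
    W ∈ Ideal.span {algebraMap S _ t, (gen p S - 1) ^ (p - k)} := by
  have hπ : ∀ n, aeval (gen p S) ((X - C 1 : S[X]) ^ n) = (gen p S - 1) ^ n := by simp
  -- With `F = R + (X - 1) ^ (p - k) * Q`, the image of `R * (X - 1) ^ k` lies in `(t)` and it
  -- has degree `< p`, so its coefficients lie in `(t)`; cancelling the monic `(X - 1) ^ k`, so do
  -- those of `R`.
  obtain ⟨F, rfl⟩ := aeval_gen_surjective p S W
  have hq : ((X - C 1 : S[X]) ^ (p - k)).Monic := (monic_X_sub_C 1).pow _
  set R := F %ₘ (X - C 1) ^ (p - k)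
  set Q := F /ₘ (X - C 1) ^ (p - k)
  have hF : F = R + (X - C 1) ^ (p - k) * Q := (modByMonic_add_div F _).symm
  have hRdeg : (R * (X - C 1) ^ k).natDegree < p := by
    rcases eq_or_ne R 0 with h0 | h0
    · rw [h0, zero_mul, natDegree_zero]
      exact Nat.pos_of_neZero p
    have hRlt : R.natDegree < p - k := by
      rw [natDegree_lt_iff_degree_lt h0]
      convert degree_modByMonic_lt F hq
      rw [degree_eq_natDegree hq.ne_zero, (monic_X_sub_C 1).natDegree_pow, natDegree_X_sub_C,
        mul_one]
    calc (R * (X - C 1) ^ k).natDegree ≤ R.natDegree + k * 1 :=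
          natDegree_mul_le_of_le le_rfl (natDegree_pow_le_of_le k (natDegree_X_sub_C_le (1 : S)))
      _ < p := by omega
  have hR : R ∈ (Ideal.span {t}).map C := by
    refine mem_map_C_of_mul_monic_mem ((monic_X_sub_C 1).pow k)
      (mem_map_C_of_aeval_gen_mem p S hRdeg ?_)
    have : aeval (gen p S) (R * (X - C 1) ^ k) =
        aeval (gen p S) F * (gen p S - 1) ^ k - (gen p S - 1) ^ p * aeval (gen p S) Q := by
      have hsplit : (gen p S - 1) ^ (p - k) * (gen p S - 1) ^ k = (gen p S - 1) ^ p := by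
        rw [← pow_add, Nat.sub_add_cancel hk]
      rw [hF]
      simp only [map_add, map_mul, hπ]
      linear_combination -aeval (gen p S) Q * hsplit
    rw [this]
    exact sub_mem hW (Ideal.mul_mem_right _ _ (gen_sub_one_pow_char_mem_span p S hpt))
  rw [hF, map_add, map_mul, hπ]
  exact Ideal.add_mem _
    (Ideal.span_mono (Set.singleton_subset_iff.mpr (Set.mem_insert _ _))
      (aeval_gen_mem_of_mem_map_C p S hR))
    (Ideal.mul_mem_right _ _ (Ideal.subset_span (Set.mem_insert_of_mem _ rfl)))

end CyclicGroupAlgebra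

theorem MonoidAlgebra.isLeftRegular_algebraMap {S G : Type*} [CommRing S] [IsDomain S] [Monoid G]
    {t : S} (ht : t ≠ 0) : IsLeftRegular (algebraMap S (MonoidAlgebra S G) t) := fun x y h ↦
  smul_right_injective _ ht (by simpa only [Algebra.smul_def] using h)

theorem stmt_11_general (p : ℕ) [Fact p.Prime]
    (T : Type*) [Field T] [Algebra ℤ_[p] T] (R : Subalgebra ℤ_[p] T)
    (t θ : ↥R) (ht : Irreducible t) (d : ℕ) (hp : (p : ↥R) = t ^ d * θ)
    (j i : ℕ) (hj1 : 1 ≤ j) (hjd : j < d) (hip : i < p) :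
    letI G := Multiplicative (ZMod p)
    letI a : MonoidAlgebra ↥R G := MonoidAlgebra.of ↥R G (Multiplicative.ofAdd 1)
    letI X : Ideal (MonoidAlgebra ↥R G) :=
      Ideal.span {algebraMap ↥R (MonoidAlgebra ↥R G) (t ^ j), (a - 1) ^ i}
    letI tX : Ideal (MonoidAlgebra ↥R G) :=
      Ideal.span {algebraMap ↥R (MonoidAlgebra ↥R G) t} * X
    letI Xbar : Submodule (MonoidAlgebra ↥R G) (MonoidAlgebra ↥R G ⧸ tX) :=
      Submodule.map tX.mkQ X
    letI Vi := MonoidAlgebra ↥R G ⧸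
      Ideal.span {algebraMap ↥R (MonoidAlgebra ↥R G) t, (a - 1) ^ i}
    letI Vpi := MonoidAlgebra ↥R G ⧸
      Ideal.span {algebraMap ↥R (MonoidAlgebra ↥R G) t, (a - 1) ^ (p - i)}
    Nonempty (↥Xbar ≃ₗ[MonoidAlgebra ↥R G] Vi × Vpi) := by
  have hpt : (p : ↥R) ∈ Ideal.span {t ^ (j + 1)} :=
    Ideal.mem_span_singleton.mpr (hp ▸ (pow_dvd_pow t hjd).mul_right θ)
  have hxy : (CyclicGroupAlgebra.gen p ↥R - 1) ^ i * (CyclicGroupAlgebra.gen p ↥R - 1) ^ (p - i)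
      ∈ Ideal.span {algebraMap ↥R (MonoidAlgebra ↥R (Multiplicative (ZMod p))) t ^ (j + 1)} := by
    rw [← pow_add, Nat.add_sub_cancel' hip.le, ← map_pow]
    exact CyclicGroupAlgebra.gen_sub_one_pow_char_mem_span p ↥R hpt
  have hx (w : MonoidAlgebra ↥R (Multiplicative (ZMod p))) :=
    CyclicGroupAlgebra.mem_span_pair_of_mul_gen_sub_one_pow_mem p ↥R (W := w)
      (Ideal.span_singleton_le_span_singleton.mpr (dvd_pow_self t (by omega)) hpt) hip.le
  rw [map_pow]
  exact nonempty_map_mkQ_span_pair_equiv_prod (MonoidAlgebra.isLeftRegular_algebraMap ht.ne_zero)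
    hj1 hx hxy

/-- With `R` the ring of integers of a finite ramified extension
of `ℚ_p` (prime element `t`, ramification index `d`), `G = ⟨a | a^p = 1⟩`, and
`X_{ji} = t^j·RG + (a-1)^i·RG` for `1 ≤ j < d`, `1 ≤ i < p`, the reduction
`X̄_{ji} = X_{ji}/(t·X_{ji})` is isomorphic to `V_i ⊕ V_{p-i}` as a module over
`R̄G = RG/(t)`, where `V_k = R̄G/((ā-1)^k·R̄G)` is realized as the `RG`-module
`RG/(t, (a-1)^k)` (and `X/tX` as the image of `X` in `RG/(t·X)`). -/
theorem stmt_11 (p : ℕ) [Fact p.Prime]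
    (T : Type*) [Field T] [Algebra ℚ_[p] T] [FiniteDimensional ℚ_[p] T]
    [Algebra ℤ_[p] T] [IsScalarTower ℤ_[p] ℚ_[p] T]
    (R : Subalgebra ℤ_[p] T) (hR : R = integralClosure ℤ_[p] T)
    (t θ : ↥R) (ht : Irreducible t) (hθ : IsUnit θ)
    (d : ℕ) (hd : 1 < d) (hp : (p : ↥R) = t ^ d * θ)
    (j i : ℕ) (hj1 : 1 ≤ j) (hjd : j < d) (hi1 : 1 ≤ i) (hip : i < p) :
    letI G := Multiplicative (ZMod p)
    letI a : MonoidAlgebra ↥R G := MonoidAlgebra.of ↥R G (Multiplicative.ofAdd 1)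
    letI X : Ideal (MonoidAlgebra ↥R G) :=
      Ideal.span {algebraMap ↥R (MonoidAlgebra ↥R G) (t ^ j), (a - 1) ^ i}
    letI tX : Ideal (MonoidAlgebra ↥R G) :=
      Ideal.span {algebraMap ↥R (MonoidAlgebra ↥R G) t} * X
    letI Xbar : Submodule (MonoidAlgebra ↥R G) (MonoidAlgebra ↥R G ⧸ tX) :=
      Submodule.map tX.mkQ X
    letI Vi := MonoidAlgebra ↥R G ⧸
      Ideal.span {algebraMap ↥R (MonoidAlgebra ↥R G) t, (a - 1) ^ i}
    letI Vpi := MonoidAlgebra ↥R G ⧸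
      Ideal.span {algebraMap ↥R (MonoidAlgebra ↥R G) t, (a - 1) ^ (p - i)}
    Nonempty (↥Xbar ≃ₗ[MonoidAlgebra ↥R G] Vi × Vpi) :=
  stmt_11_general p T R t θ ht d hp j i hj1 hjd hip
end

section
/- Let p be a prime, R the ring of integers of a finite ramified extension of ℚ_p with prime element t, G = ⟨a | a^p = 1⟩, 1 ≤ j < d, 1 ≤ s < n as above. Let Z_{js} ⊆ RG ⊕ RG be the set of pairs (x,y) with t^j(a-1)x + (a-1)^{s+1}y = 0. Then Z_{js} is generated as an RG-module by u₁ = (0, ω), u₂ = ((a-1)^s, -t^j), and u₃ = (t^{-j}(ω - (a-1)^{p-1}), (a-1)^{p-s-1}), where ω = Φ_p(a) = 1 + a + ⋯ + a^{p-1}. -/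
set_option synthInstance.maxHeartbeats 1000000

/-!
Write `E = a - 1` and `τ = t ^ j`. Evaluation at `a` identifies `RG` with `R[X] ⧸ (X ^ p - 1)`, so
the annihilator of `E` is `ω • RG`; and since `X ^ p - 1 ≡ (X - 1) ^ p` modulo `p`, `τ ∣ p` and
`(X - 1) ^ s` is monic, `E ^ s * v ∈ τ • RG` forces `v ∈ E ^ (p - s) • RG + τ • RG`.
If `τ E x + E ^ (s + 1) y = 0`, the first fact gives `τ x + E ^ s y = ω c`. Substituting
`ω = τ u3x + E ^ (p - 1)` makes `E ^ s (y - E ^ (p - s - 1) c)` a multiple of `τ`; the second fact,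
`E ^ p = -τ E u3x` and cancelling the non-zero scalar `τ` then give `(x, y) = (c + E q) u₃ - r u₂`.
-/

open Polynomial

namespace Polynomial

variable {R : Type*} [CommRing R]

theorem C_dvd_iff_map_mk_eq_zero (c : R) (f : R[X]) :
    C c ∣ f ↔ f.map (Ideal.Quotient.mk (Ideal.span {c})) = 0 := by
  simp only [C_dvd_iff_dvd_coeff, Polynomial.ext_iff, coeff_map, coeff_zero,
    Ideal.Quotient.eq_zero_iff_mem, Ideal.mem_span_singleton]

theorem Monic.C_dvd_of_C_dvd_mul {m f : R[X]} {c : R} (hm : m.Monic) (h : C c ∣ m * f) :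
    C c ∣ f := by
  rw [C_dvd_iff_map_mk_eq_zero, Polynomial.map_mul] at h
  exact (C_dvd_iff_map_mk_eq_zero c f).2 ((hm.map _).mul_right_eq_zero_iff.1 h)

theorem C_dvd_X_pow_sub_one_sub_X_sub_one_pow {p : ℕ} (hp : p.Prime) :
    C (p : R) ∣ X ^ p - 1 - (X - 1) ^ p := by
  obtain ⟨r, hr⟩ := exists_add_pow_prime_eq hp (X - 1 : R[X]) 1
  refine ⟨(X - 1) * r, ?_⟩
  rw [sub_add_cancel] at hr
  rw [hr, map_natCast]
  ring

theorem C_dvd_add_X_sub_one_pow_mul {p s : ℕ} (hp : p.Prime) (hs : s ≤ p) {c : R}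
    (hc : c ∣ p) {f Q : R[X]} (h : C c ∣ (X - 1) ^ s * f + (X ^ p - 1) * Q) :
    C c ∣ f + (X - 1) ^ (p - s) * Q := by
  have hcp : C c ∣ (X ^ p - 1 - (X - 1) ^ p) * Q :=
    (_root_.map_dvd C hc |>.trans (C_dvd_X_pow_sub_one_sub_X_sub_one_pow hp)).mul_right Q
  refine ((monic_X_sub_C 1).pow s).C_dvd_of_C_dvd_mul ?_
  have hsplit : (X - C 1) ^ s * (f + (X - 1) ^ (p - s) * Q) =
      ((X - 1) ^ s * f + (X ^ p - 1) * Q) - (X ^ p - 1 - (X - 1) ^ p) * Q := by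
    rw [C_1, mul_add, ← mul_assoc, ← pow_add, Nat.add_sub_cancel' hs]
    ring
  rw [hsplit]
  exact dvd_sub h hcp

end Polynomial

namespace MonoidAlgebra

variable {R : Type*} [CommRing R]

section Cyclic

variable {n : ℕ}

local notation "σ" => of R (Multiplicative (ZMod n)) (Multiplicative.ofAdd 1)

theorem of_ofAdd_one_pow (m : ℕ) : σ ^ m = of R _ (Multiplicative.ofAdd (m : ZMod n)) := by
  rw [← map_pow, ← ofAdd_nsmul, nsmul_one]

theorem of_ofAdd_one_pow_self : σ ^ n = 1 := by
  rw [of_ofAdd_one_pow, ZMod.natCast_self, ofAdd_zero, map_one]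

theorem coeff_aeval_of_ofAdd_one {f : R[X]} (hf : f.natDegree < n) {m : ℕ} (hm : m < n) :
    (aeval σ f).coeff (Multiplicative.ofAdd (m : ZMod n)) = f.coeff m := by
  rw [aeval_eq_sum_range' hf]
  simp_rw [of_ofAdd_one_pow]
  rw [coeff_sum, Finsupp.finsetSum_apply, Finset.sum_eq_single_of_mem m (Finset.mem_range.2 hm)]
  · simp [of_apply, smul_single]
  · intro i hi him
    have hcast : Multiplicative.ofAdd (i : ZMod n) ≠ Multiplicative.ofAdd (m : ZMod n) := by
      intro h
      have := congrArg (fun g => (Multiplicative.toAdd g).val) h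
      simp only [toAdd_ofAdd, ZMod.val_cast_of_lt hm,
        ZMod.val_cast_of_lt (Finset.mem_range.1 hi)] at this
      exact him this
    simp [of_apply, smul_single, hcast]

variable [NeZero n]

theorem aeval_of_ofAdd_one_surjective : Function.Surjective (aeval (R := R) σ) := by
  intro u
  refine ⟨∑ g ∈ u.coeff.support, C (u.coeff g) * X ^ (Multiplicative.toAdd g).val, ?_⟩
  conv_rhs => rw [← sum_coeff_single u]
  rw [map_sum]
  refine Finset.sum_congr rfl fun g _ => ?_
  rw [map_mul, aeval_C, map_pow, aeval_X, of_ofAdd_one_pow, ZMod.natCast_zmod_val, ofAdd_toAdd,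
    coe_algebraMap, Function.comp_apply, of_apply, single_mul_single, one_mul, mul_one,
    Algebra.algebraMap_self, RingHom.id_apply]

theorem aeval_of_ofAdd_one_eq_zero_iff (f : R[X]) : aeval σ f = 0 ↔ X ^ n - 1 ∣ f := by
  nontriviality R
  have hmonic : (X ^ n - 1 : R[X]).Monic := by
    simpa using monic_X_pow_sub_C (1 : R) (NeZero.ne n)
  have hdeg : (X ^ n - 1 : R[X]).natDegree = n := by
    simpa using natDegree_X_pow_sub_C (n := n) (r := (1 : R))
  have hkill : aeval σ (X ^ n - 1 : R[X]) = 0 := by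
    rw [map_sub, map_pow, aeval_X, of_ofAdd_one_pow_self, map_one, sub_self]
  constructor
  · intro h
    have hr : aeval σ (f %ₘ (X ^ n - 1)) = 0 := by
      rw [← modByMonic_add_div f (X ^ n - 1), map_add, map_mul, hkill, zero_mul, add_zero] at h
      exact h
    have hrdeg := natDegree_modByMonic_lt f hmonic
      fun h1 => NeZero.ne n (by rw [← hdeg, h1, natDegree_one])
    rw [hdeg] at hrdeg
    rw [← modByMonic_eq_zero_iff_dvd hmonic]
    ext m
    rw [Polynomial.coeff_zero]
    rcases lt_or_ge m n with hm | hm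
    · rw [← coeff_aeval_of_ofAdd_one hrdeg hm, hr]
      rfl
    · exact coeff_eq_zero_of_natDegree_lt (hrdeg.trans_le hm)
  · rintro ⟨Q, rfl⟩
    rw [map_mul, hkill, zero_mul]

theorem aeval_of_ofAdd_one_geom_sum :
    aeval σ (∑ i ∈ Finset.range n, X ^ i : R[X]) = ∑ g, of R _ g := by
  simp only [map_sum, map_pow, aeval_X, of_ofAdd_one_pow]
  refine Finset.sum_nbij' (fun i => Multiplicative.ofAdd (i : ZMod n))
    (fun g => (Multiplicative.toAdd g).val) (by simp) (by simp [ZMod.val_lt]) ?_ ?_ (by simp)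
  · intro i hi
    simp [ZMod.val_cast_of_lt (Finset.mem_range.1 hi)]
  · intro g _
    simp

theorem sub_one_mul_sum_of : (σ - 1) * ∑ g, of R (Multiplicative (ZMod n)) g = 0 := by
  have : (σ - 1) * ∑ g, of R _ g = aeval σ ((∑ i ∈ Finset.range n, X ^ i) * (X - 1) : R[X]) := by
    rw [map_mul, aeval_of_ofAdd_one_geom_sum, mul_comm]
    simp
  rw [this, geom_sum_mul, aeval_of_ofAdd_one_eq_zero_iff]

theorem exists_eq_sum_of_mul_of_sub_one_mul_eq_zero {v : R[Multiplicative (ZMod n)]}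
    (h : (σ - 1) * v = 0) : ∃ c, v = (∑ g, of R (Multiplicative (ZMod n)) g) * c := by
  obtain ⟨f, rfl⟩ := aeval_of_ofAdd_one_surjective v
  have : (σ - 1) * aeval σ f = aeval σ ((X - 1) * f) := by simp
  rw [this, aeval_of_ofAdd_one_eq_zero_iff, ← geom_sum_mul, mul_comm] at h
  obtain ⟨Q, hQ⟩ := h
  refine ⟨aeval σ Q, ?_⟩
  rw [← aeval_of_ofAdd_one_geom_sum, ← map_mul]
  congr 1
  refine (monic_X_sub_C (1 : R)).isRegular.left ?_
  simp only [C_1]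
  rw [hQ]
  ring

end Cyclic

section PrimeOrder

variable {p : ℕ} [Fact p.Prime]

local notation "σ" => of R (Multiplicative (ZMod p)) (Multiplicative.ofAdd 1)
local notation "ω" => ∑ g, of R (Multiplicative (ZMod p)) g

theorem exists_eq_sub_one_pow_mul_add_algebraMap_mul {c : R} (hc : c ∣ p) {s : ℕ} (hs : s ≤ p)
    {v w : R[Multiplicative (ZMod p)]}
    (h : (σ - 1) ^ s * v = algebraMap R _ c * w) :
    ∃ q r, v = (σ - 1) ^ (p - s) * q + algebraMap R _ c * r := by
  obtain ⟨f, rfl⟩ := aeval_of_ofAdd_one_surjective v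
  obtain ⟨g, rfl⟩ := aeval_of_ofAdd_one_surjective w
  have hfg : aeval σ ((X - 1) ^ s * f - C c * g) = 0 := by
    simp only [map_sub, map_mul, map_pow, aeval_X, map_one, aeval_C, h, sub_self]
  obtain ⟨Q, hQ⟩ := (aeval_of_ofAdd_one_eq_zero_iff _).1 hfg
  obtain ⟨r, hr⟩ : C c ∣ f + (X - 1) ^ (p - s) * -Q :=
    C_dvd_add_X_sub_one_pow_mul Fact.out hs hc ⟨g, by linear_combination hQ⟩
  refine ⟨aeval σ Q, aeval σ r, ?_⟩
  have := congrArg (aeval σ) hr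
  simp only [map_add, map_mul, map_neg, map_pow, map_sub, aeval_X, map_one, aeval_C] at this
  linear_combination this

variable {c : R} {s : ℕ} {u : R[Multiplicative (ZMod p)]}

theorem sub_one_pow_eq_neg_algebraMap_mul (hu : algebraMap R _ c * u = ω - (σ - 1) ^ (p - 1)) :
    (σ - 1) ^ p = -(algebraMap R _ c * ((σ - 1) * u)) := by
  have hp : (σ - 1) * (σ - 1) ^ (p - 1) = (σ - 1) ^ p := by
    rw [← pow_succ', Nat.sub_add_cancel (Fact.out : p.Prime).one_le]
  linear_combination (σ - 1) * hu + sub_one_mul_sum_of (R := R) (n := p) - hp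

theorem mem_span_of_algebraMap_mul_add_sub_one_pow_mul_eq_zero [IsDomain R] (hc0 : c ≠ 0)
    (hcp : c ∣ p) (hs : s < p) (hu : algebraMap R _ c * u = ω - (σ - 1) ^ (p - 1))
    {x y : R[Multiplicative (ZMod p)]}
    (hxy : algebraMap R _ c * (σ - 1) * x + (σ - 1) ^ (s + 1) * y = 0) :
    (x, y) ∈ Submodule.span R[Multiplicative (ZMod p)]
      {(0, ω), ((σ - 1) ^ s, -algebraMap R _ c), (u, (σ - 1) ^ (p - s - 1))} := by
  set τ := algebraMap R R[Multiplicative (ZMod p)] c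
  have e₁ : (σ - 1) ^ (s + 1) = (σ - 1) * (σ - 1) ^ s := pow_succ' _ _
  have e₂ : (σ - 1) ^ s * (σ - 1) ^ (p - s - 1) = (σ - 1) ^ (p - 1) := by
    rw [← pow_add]; congr 1; omega
  have e₃ : (σ - 1) * (σ - 1) ^ (p - s - 1) = (σ - 1) ^ (p - s) := by
    rw [← pow_succ']; congr 1; omega
  have e₄ : (σ - 1) ^ s * (σ - 1) ^ (p - s) = (σ - 1) ^ p := by
    rw [← pow_add]; congr 1; omega
  obtain ⟨c', hc'⟩ := exists_eq_sum_of_mul_of_sub_one_mul_eq_zero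
    (v := τ * x + (σ - 1) ^ s * y) (by linear_combination hxy - y * e₁)
  obtain ⟨q, r, hqr⟩ := exists_eq_sub_one_pow_mul_add_algebraMap_mul hcp hs.le
    (v := y - (σ - 1) ^ (p - s - 1) * c') (w := u * c' - x)
    (by linear_combination hc' - c' * hu - c' * e₂)
  have hx : x = (c' + (σ - 1) * q) * u + -r * (σ - 1) ^ s := by
    have hτx : τ * x = τ * ((c' + (σ - 1) * q) * u + -r * (σ - 1) ^ s) := by
      linear_combination hc' - c' * hu - (σ - 1) ^ s * hqr - c' * e₂ - q * e₄ -
        q * sub_one_pow_eq_neg_algebraMap_mul hu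
    exact smul_right_injective _ hc0 (by simpa only [Algebra.smul_def] using hτx)
  have hy : y = (c' + (σ - 1) * q) * (σ - 1) ^ (p - s - 1) + -r * -τ := by
    linear_combination hqr - q * e₃
  have hxy' : ((x, y) : R[Multiplicative (ZMod p)] × R[Multiplicative (ZMod p)]) =
      (c' + (σ - 1) * q) • (u, (σ - 1) ^ (p - s - 1)) + (-r) • ((σ - 1) ^ s, -τ) := by
    ext <;> simp [hx, hy]
  rw [hxy']
  exact add_mem (Submodule.smul_mem _ _ (Submodule.subset_span (by simp)))
    (Submodule.smul_mem _ _ (Submodule.subset_span (by simp)))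

theorem ker_coprod_smul_sub_one_eq_span [IsDomain R] (hc0 : c ≠ 0) (hcp : c ∣ p) (hs : s < p)
    (hu : algebraMap R _ c * u = ω - (σ - 1) ^ (p - 1)) :
    LinearMap.ker (LinearMap.coprod ((algebraMap R _ c * (σ - 1)) • LinearMap.id)
      ((σ - 1) ^ (s + 1) • LinearMap.id)) =
      Submodule.span R[Multiplicative (ZMod p)]
        {(0, ω), ((σ - 1) ^ s, -algebraMap R _ c), (u, (σ - 1) ^ (p - s - 1))} := by
  apply le_antisymm
  · rintro ⟨x, y⟩ hxy
    simp only [LinearMap.mem_ker, LinearMap.coprod_apply, LinearMap.smul_apply, LinearMap.id_coe,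
      id_eq, smul_eq_mul] at hxy
    exact mem_span_of_algebraMap_mul_add_sub_one_pow_mul_eq_zero hc0 hcp hs hu hxy
  · rw [Submodule.span_le]
    rintro z hz
    simp only [Set.mem_insert_iff, Set.mem_singleton_iff] at hz
    have e₁ : (σ - 1) ^ (s + 1) = (σ - 1) * (σ - 1) ^ s := pow_succ' _ _
    rcases hz with rfl | rfl | rfl <;>
      simp only [SetLike.mem_coe, LinearMap.mem_ker, LinearMap.coprod_apply, LinearMap.smul_apply,
        LinearMap.id_coe, id_eq, smul_eq_mul]
    · linear_combination ω * e₁ + (σ - 1) ^ s * sub_one_mul_sum_of (R := R) (n := p)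
    · linear_combination -algebraMap R _ c * e₁
    · have e₂ : (σ - 1) ^ (s + 1) * (σ - 1) ^ (p - s - 1) = (σ - 1) ^ p := by
        rw [← pow_add]; congr 1; omega
      linear_combination sub_one_pow_eq_neg_algebraMap_mul hu + e₂

end PrimeOrder

end MonoidAlgebra

theorem stmt_14_general (p : ℕ) [Fact p.Prime]
    (T : Type*) [Field T] [Algebra ℤ_[p] T]
    (R : Subalgebra ℤ_[p] T)
    (t θ : ↥R) (ht : Irreducible t)
    (d : ℕ) (hp : (p : ↥R) = t ^ d * θ)
    (η : Polynomial ↥R) (hdvd : η ∣ Polynomial.cyclotomic p ↥R)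
    (n : ℕ) (hn : n = η.natDegree)
    (j s : ℕ) (hjd : j < d) (hsn : s < n)
    (a : MonoidAlgebra ↥R (Multiplicative (ZMod p)))
    (ha : a = MonoidAlgebra.of ↥R (Multiplicative (ZMod p)) (Multiplicative.ofAdd 1))
    -- `ω = Φ_p(a) = 1 + a + ⋯ + a^(p-1)`
    (ω : MonoidAlgebra ↥R (Multiplicative (ZMod p)))
    (hω : ω = ∑ g : Multiplicative (ZMod p), MonoidAlgebra.of ↥R (Multiplicative (ZMod p)) g)
    (μ : (MonoidAlgebra ↥R (Multiplicative (ZMod p)) × MonoidAlgebra ↥R (Multiplicative (ZMod p)))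
      →ₗ[MonoidAlgebra ↥R (Multiplicative (ZMod p))] MonoidAlgebra ↥R (Multiplicative (ZMod p)))
    (hμ : μ = LinearMap.coprod
      ((algebraMap ↥R (MonoidAlgebra ↥R (Multiplicative (ZMod p))) (t ^ j) * (a - 1)) • LinearMap.id)
      (((a - 1) ^ (s + 1)) • LinearMap.id))
    -- `u₃ = (t^{-j}(ω - (a-1)^{p-1}), (a-1)^{p-s-1})`: `t^{-j}(ω - (a-1)^{p-1})` is the
    -- (unique) element `u3x` of `RG` with `t^j·u3x = ω - (a-1)^{p-1}`
    (u3x : MonoidAlgebra ↥R (Multiplicative (ZMod p)))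
    (hu3x : algebraMap ↥R (MonoidAlgebra ↥R (Multiplicative (ZMod p))) (t ^ j) * u3x =
      ω - (a - 1) ^ (p - 1)) :
    LinearMap.ker μ = Submodule.span (MonoidAlgebra ↥R (Multiplicative (ZMod p)))
      {(0, ω), ((a - 1) ^ s, -(algebraMap ↥R (MonoidAlgebra ↥R (Multiplicative (ZMod p))) (t ^ j))),
        (u3x, (a - 1) ^ (p - s - 1))} := by
  subst ha hω hμ
  have hs : s < p := by
    have hη := natDegree_le_of_dvd hdvd (cyclotomic_ne_zero p ↥R)
    rw [natDegree_cyclotomic, Nat.totient_prime Fact.out] at hη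
    omega
  have htj : t ^ j ∣ (p : ↥R) := hp ▸ (pow_dvd_pow t hjd.le).mul_right θ
  exact MonoidAlgebra.ker_coprod_smul_sub_one_eq_span (pow_ne_zero j ht.ne_zero) htj hs hu3x

/-- With `R` the ring of integers of a finite ramified extension
of `ℚ_p` (prime element `t`), `G = ⟨a | a^p = 1⟩`, `1 ≤ j < d`, `1 ≤ s < n`,
the kernel `Z_{js} ⊆ RG ⊕ RG` of `(x,y) ↦ t^j(a-1)x + (a-1)^{s+1}y` is
generated as an `RG`-module by `u₁ = (0, ω)`, `u₂ = ((a-1)^s, -t^j)` and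
`u₃ = (t^{-j}(ω - (a-1)^{p-1}), (a-1)^{p-s-1})`, where `ω = Φ_p(a) = ∑ a^k`. -/
theorem stmt_14 (p : ℕ) [Fact p.Prime]
    (T : Type*) [Field T] [Algebra ℚ_[p] T] [FiniteDimensional ℚ_[p] T]
    [Algebra ℤ_[p] T] [IsScalarTower ℤ_[p] ℚ_[p] T]
    (R : Subalgebra ℤ_[p] T) (hR : R = integralClosure ℤ_[p] T)
    (t θ : ↥R) (ht : Irreducible t) (hθ : IsUnit θ)
    (d : ℕ) (hd : 1 < d) (hp : (p : ↥R) = t ^ d * θ)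
    (η : Polynomial ↥R) (hη : Irreducible η) (hdvd : η ∣ Polynomial.cyclotomic p ↥R)
    (n : ℕ) (hn : n = η.natDegree) (hn1 : 1 < n)
    (j s : ℕ) (hj1 : 1 ≤ j) (hjd : j < d) (hs1 : 1 ≤ s) (hsn : s < n)
    (a : MonoidAlgebra ↥R (Multiplicative (ZMod p)))
    (ha : a = MonoidAlgebra.of ↥R (Multiplicative (ZMod p)) (Multiplicative.ofAdd 1))
    -- `ω = Φ_p(a) = 1 + a + ⋯ + a^(p-1)`
    (ω : MonoidAlgebra ↥R (Multiplicative (ZMod p)))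
    (hω : ω = ∑ g : Multiplicative (ZMod p), MonoidAlgebra.of ↥R (Multiplicative (ZMod p)) g)
    (μ : (MonoidAlgebra ↥R (Multiplicative (ZMod p)) × MonoidAlgebra ↥R (Multiplicative (ZMod p)))
      →ₗ[MonoidAlgebra ↥R (Multiplicative (ZMod p))] MonoidAlgebra ↥R (Multiplicative (ZMod p)))
    (hμ : μ = LinearMap.coprod
      ((algebraMap ↥R (MonoidAlgebra ↥R (Multiplicative (ZMod p))) (t ^ j) * (a - 1)) • LinearMap.id)
      (((a - 1) ^ (s + 1)) • LinearMap.id))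
    -- `u₃ = (t^{-j}(ω - (a-1)^{p-1}), (a-1)^{p-s-1})`: `t^{-j}(ω - (a-1)^{p-1})` is the
    -- (unique) element `u3x` of `RG` with `t^j·u3x = ω - (a-1)^{p-1}`
    (u3x : MonoidAlgebra ↥R (Multiplicative (ZMod p)))
    (hu3x : algebraMap ↥R (MonoidAlgebra ↥R (Multiplicative (ZMod p))) (t ^ j) * u3x =
      ω - (a - 1) ^ (p - 1)) :
    LinearMap.ker μ = Submodule.span (MonoidAlgebra ↥R (Multiplicative (ZMod p)))
      {(0, ω), ((a - 1) ^ s, -(algebraMap ↥R (MonoidAlgebra ↥R (Multiplicative (ZMod p))) (t ^ j))),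
        (u3x, (a - 1) ^ (p - s - 1))} :=
  stmt_14_general p T R t θ ht d hp η hdvd n hn j s hjd hsn a ha ω hω μ hμ u3x hu3x
end
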